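/- arXiv:2303.14319 — 6 statements merged into one kernel-verified Lean document; each statement's English description precedes it below -/
import Mathlib

section
/- Let k be a field and n ≥ 1 a natural number. Let φ : k[x₀,…,xₙ,y₀,…,yₙ] → k[x₀,…,xₙ,t] be the k-algebra homomorphism of polynomial rings determined by φ(xᵢ) = xᵢ and φ(yᵢ) = t·xᵢ for all 0 ≤ i ≤ n. Then the kernel of φ is exactly the ideal generated by the 2×2 minors xᵢyⱼ − xⱼyᵢ for 0 ≤ i < j ≤ n. -/
open MvPolynomial


namespace KerDiagAux

variable {k : Type*} [Field k] {n : ℕ}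

/-- target exponent of a source monomial -/
noncomputable def cls (n : ℕ) (s : (Fin (n+1) ⊕ Fin (n+1)) →₀ ℕ) : Option (Fin (n+1)) →₀ ℕ :=
  (∑ i : Fin (n+1), Finsupp.single (some i) (s (Sum.inl i) + s (Sum.inr i)))
    + Finsupp.single none (∑ i : Fin (n+1), s (Sum.inr i))

lemma cls_some (s : (Fin (n+1) ⊕ Fin (n+1)) →₀ ℕ) (j : Fin (n+1)) :
    cls n s (some j) = s (Sum.inl j) + s (Sum.inr j) := by
  simp [cls, Finsupp.finset_sum_apply, Finsupp.single_apply, Finset.sum_add_distrib]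

lemma cls_none (s : (Fin (n+1) ⊕ Fin (n+1)) →₀ ℕ) :
    cls n s none = ∑ i : Fin (n+1), s (Sum.inr i) := by
  simp [cls, Finsupp.finset_sum_apply, Finsupp.single_apply, Finset.sum_add_distrib]

lemma cls_add (s t : (Fin (n+1) ⊕ Fin (n+1)) →₀ ℕ) :
    cls n (s + t) = cls n s + cls n t := by
  ext v
  cases v <;> simp [cls_some, cls_none, Finset.sum_add_distrib] <;> ring

lemma cls_single_inl (i : Fin (n+1)) (e : ℕ) :
    cls n (Finsupp.single (Sum.inl i) e) = Finsupp.single (some i) e := by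
  ext v
  cases v <;> simp [cls_some, cls_none, Finsupp.single_apply]

lemma cls_single_inr (i : Fin (n+1)) (e : ℕ) :
    cls n (Finsupp.single (Sum.inr i) e) = Finsupp.single none e + Finsupp.single (some i) e := by
  ext v
  cases v <;> simp [cls_some, cls_none, Finsupp.single_apply, Finset.sum_ite_eq]


/-- the map on variables -/
noncomputable def Fm (k : Type*) [Field k] (n : ℕ) :
    (Fin (n+1) ⊕ Fin (n+1)) → MvPolynomial (Option (Fin (n+1))) k :=
  Sum.elim (fun i => X (Option.some i)) (fun i => X none * X (Option.some i))

lemma aeval_Fm_monomial (s : (Fin (n+1) ⊕ Fin (n+1)) →₀ ℕ) (c : k) :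
    aeval (Fm k n) (monomial s c) = monomial (cls n s) c := by
  induction s using Finsupp.induction with
  | zero =>
    have : cls n (0 : (Fin (n+1) ⊕ Fin (n+1)) →₀ ℕ) = 0 := by
      ext v; cases v <;> simp [cls_some, cls_none]
    rw [this, monomial_zero', monomial_zero', aeval_C]
    rfl
  | single_add v e t hv he ih =>
    rw [show (monomial (Finsupp.single v e + t)) c
        = monomial (Finsupp.single v e) 1 * monomial t c by rw [monomial_mul, one_mul],
      map_mul, ih, cls_add]
    rw [show (monomial (cls n (Finsupp.single v e) + cls n t)) c
        = monomial (cls n (Finsupp.single v e)) 1 * monomial (cls n t) c by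
          rw [monomial_mul, one_mul]]
    congr 1
    rw [← X_pow_eq_monomial, map_pow]
    cases v with
    | inl i => simp [Fm, cls_single_inl, X_pow_eq_monomial]
    | inr i =>
      simp only [Fm, Sum.elim_inr, aeval_X]
      rw [mul_pow, X_pow_eq_monomial, X_pow_eq_monomial, monomial_mul, one_mul,
        cls_single_inr]

lemma coeff_aeval_Fm (f : MvPolynomial (Fin (n+1) ⊕ Fin (n+1)) k)
    (u : Option (Fin (n+1)) →₀ ℕ) :
    coeff u (aeval (Fm k n) f)
      = ∑ s ∈ f.support.filter (fun s => cls n s = u), coeff s f := by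
  conv_lhs => rw [f.as_sum, map_sum, coeff_sum]
  simp_rw [aeval_Fm_monomial, coeff_monomial]
  rw [Finset.sum_filter]

/-- the ideal of minors -/
noncomputable def Im (k : Type*) [Field k] (n : ℕ) :
    Ideal (MvPolynomial (Fin (n+1) ⊕ Fin (n+1)) k) :=
  Ideal.span { f | ∃ i j : Fin (n + 1), i < j ∧
    f = X (Sum.inl i) * X (Sum.inr j) - X (Sum.inl j) * X (Sum.inr i) }

lemma minor_mem {i j : Fin (n+1)} (hij : i ≠ j) :
    (X (Sum.inl i) * X (Sum.inr j) - X (Sum.inl j) * X (Sum.inr i) :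
      MvPolynomial (Fin (n+1) ⊕ Fin (n+1)) k) ∈ Im k n := by
  rcases lt_or_gt_of_ne hij with h | h
  · exact Ideal.subset_span ⟨i, j, h, rfl⟩
  · have h1 : (X (Sum.inl j) * X (Sum.inr i) - X (Sum.inl i) * X (Sum.inr j) :
        MvPolynomial (Fin (n+1) ⊕ Fin (n+1)) k) ∈ Im k n :=
      Ideal.subset_span ⟨j, i, h, rfl⟩
    have h2 := neg_mem h1
    rw [show -(X (Sum.inl j) * X (Sum.inr i) - X (Sum.inl i) * X (Sum.inr j))
        = (X (Sum.inl i) * X (Sum.inr j) - X (Sum.inl j) * X (Sum.inr i) :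
          MvPolynomial (Fin (n+1) ⊕ Fin (n+1)) k) by ring] at h2
    exact h2


lemma X_eq_monomial (v : Fin (n+1) ⊕ Fin (n+1)) :
    (X v : MvPolynomial (Fin (n+1) ⊕ Fin (n+1)) k) = monomial (Finsupp.single v 1) 1 := by
  rw [← X_pow_eq_monomial, pow_one]

lemma monomial_sub_mem :
    ∀ (N : ℕ) (s s' : (Fin (n+1) ⊕ Fin (n+1)) →₀ ℕ),
      (∑ i : Fin (n+1), (s (Sum.inr i) - s' (Sum.inr i))) ≤ N →
      (∀ i, s (Sum.inl i) + s (Sum.inr i) = s' (Sum.inl i) + s' (Sum.inr i)) →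
      (∑ i : Fin (n+1), s (Sum.inr i)) = (∑ i : Fin (n+1), s' (Sum.inr i)) →
      (monomial s 1 - monomial s' 1 : MvPolynomial (Fin (n+1) ⊕ Fin (n+1)) k) ∈ Im k n := by
  intro N
  induction N with
  | zero =>
    intro s s' hm hA hB
    have hle : ∀ i, s (Sum.inr i) ≤ s' (Sum.inr i) := by
      intro i
      have := Finset.sum_eq_zero_iff.mp (Nat.le_zero.mp hm) i (Finset.mem_univ i)
      omega
    have hb : ∀ i, s (Sum.inr i) = s' (Sum.inr i) := by
      by_contra hc
      push_neg at hc
      obtain ⟨i, hi⟩ := hc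
      have : (∑ i : Fin (n+1), s (Sum.inr i)) < ∑ i : Fin (n+1), s' (Sum.inr i) :=
        Finset.sum_lt_sum (fun i _ => hle i) ⟨i, Finset.mem_univ i, lt_of_le_of_ne (hle i) hi⟩
      omega
    have hss : s = s' := by
      ext v
      cases v with
      | inl a => have h1 := hA a; have h2 := hb a; omega
      | inr a => exact hb a
    rw [hss, sub_self]
    exact Ideal.zero_mem _
  | succ N ih =>
    intro s s' hm hA hB
    by_cases h0 : (∑ i : Fin (n+1), (s (Sum.inr i) - s' (Sum.inr i))) ≤ N
    · exact ih s s' h0 hA hB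
    have hjex : ∃ j, s' (Sum.inr j) < s (Sum.inr j) := by
      by_contra hc
      push_neg at hc
      have : (∑ i : Fin (n+1), (s (Sum.inr i) - s' (Sum.inr i))) = 0 :=
        Finset.sum_eq_zero (fun i _ => by have := hc i; omega)
      omega
    obtain ⟨j, hj⟩ := hjex
    have hiex : ∃ i, s (Sum.inr i) < s' (Sum.inr i) := by
      by_contra hc
      push_neg at hc
      have : (∑ i : Fin (n+1), s' (Sum.inr i)) < ∑ i : Fin (n+1), s (Sum.inr i) :=
        Finset.sum_lt_sum (fun a _ => hc a) ⟨j, Finset.mem_univ j, hj⟩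
      omega
    obtain ⟨i, hi⟩ := hiex
    have hij : i ≠ j := by intro h; rw [h] at hi; omega
    have hsi : 1 ≤ s (Sum.inl i) := by have := hA i; omega
    have hsj : 1 ≤ s (Sum.inr j) := by omega
    set w : (Fin (n+1) ⊕ Fin (n+1)) →₀ ℕ :=
      Finsupp.single (Sum.inl i) 1 + Finsupp.single (Sum.inr j) 1 with hw
    set w' : (Fin (n+1) ⊕ Fin (n+1)) →₀ ℕ :=
      Finsupp.single (Sum.inl j) 1 + Finsupp.single (Sum.inr i) 1 with hw'
    have hwl : ∀ a : Fin (n+1), w (Sum.inl a) = if a = i then 1 else 0 := by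
      intro a
      by_cases h : a = i
      · subst h; simp [hw, Finsupp.single_apply]
      · simp [hw, Finsupp.single_apply, h, Ne.symm h]
    have hwr : ∀ a : Fin (n+1), w (Sum.inr a) = if a = j then 1 else 0 := by
      intro a
      by_cases h : a = j
      · subst h; simp [hw, Finsupp.single_apply]
      · simp [hw, Finsupp.single_apply, h, Ne.symm h]
    have hw'l : ∀ a : Fin (n+1), w' (Sum.inl a) = if a = j then 1 else 0 := by
      intro a
      by_cases h : a = j
      · subst h; simp [hw', Finsupp.single_apply]
      · simp [hw', Finsupp.single_apply, h, Ne.symm h]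
    have hw'r : ∀ a : Fin (n+1), w' (Sum.inr a) = if a = i then 1 else 0 := by
      intro a
      by_cases h : a = i
      · subst h; simp [hw', Finsupp.single_apply]
      · simp [hw', Finsupp.single_apply, h, Ne.symm h]
    have hwle : w ≤ s := by
      rw [Finsupp.le_def]
      intro v
      rcases v with a | a
      · rw [hwl a]
        split_ifs with h
        · subst h; exact hsi
        · exact Nat.zero_le _
      · rw [hwr a]
        split_ifs with h
        · subst h; exact hsj
        · exact Nat.zero_le _
    set u : (Fin (n+1) ⊕ Fin (n+1)) →₀ ℕ := s - w with hu
    have hs : u + w = s := tsub_add_cancel_of_le hwle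
    set s'' : (Fin (n+1) ⊕ Fin (n+1)) →₀ ℕ := u + w' with hs''
    have hkey : ∀ v, s'' v + w v = s v + w' v := by
      intro v
      have h1 : w v ≤ s v := Finsupp.le_def.mp hwle v
      have h2 : u v = s v - w v := Finsupp.tsub_apply s w v
      rw [hs'', Finsupp.add_apply, h2]
      omega
    -- if-free value facts
    have hv1 : s'' (Sum.inr i) = s (Sum.inr i) + 1 := by
      have k2 := hkey (Sum.inr i); rw [hwr, hw'r] at k2; simp [hij] at k2; omega
    have hv2 : s'' (Sum.inr j) + 1 = s (Sum.inr j) := by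
      have k2 := hkey (Sum.inr j); rw [hwr, hw'r] at k2; simp [Ne.symm hij] at k2; omega
    have hv3 : ∀ a, a ≠ i → a ≠ j → s'' (Sum.inr a) = s (Sum.inr a) := by
      intro a h1 h2
      have k2 := hkey (Sum.inr a); rw [hwr, hw'r] at k2; simp [h1, h2] at k2; omega
    have hu1 : s'' (Sum.inl i) + 1 = s (Sum.inl i) := by
      have k1 := hkey (Sum.inl i); rw [hwl, hw'l] at k1; simp [hij] at k1; omega
    have hu2 : s'' (Sum.inl j) = s (Sum.inl j) + 1 := by
      have k1 := hkey (Sum.inl j); rw [hwl, hw'l] at k1; simp [Ne.symm hij] at k1; omega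
    have hu3 : ∀ a, a ≠ i → a ≠ j → s'' (Sum.inl a) = s (Sum.inl a) := by
      intro a h1 h2
      have k1 := hkey (Sum.inl a); rw [hwl, hw'l] at k1; simp [h1, h2] at k1; omega
    -- hypotheses for s''
    have hA'' : ∀ a, s'' (Sum.inl a) + s'' (Sum.inr a) = s' (Sum.inl a) + s' (Sum.inr a) := by
      intro a
      have := hA a
      by_cases h1 : a = i
      · subst h1; omega
      · by_cases h2 : a = j
        · subst h2; omega
        · have := hu3 a h1 h2; have := hv3 a h1 h2; omega
    have hB'' : (∑ a : Fin (n+1), s'' (Sum.inr a)) = ∑ a : Fin (n+1), s' (Sum.inr a) := by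
      have hsum : ∑ a : Fin (n+1), (s'' (Sum.inr a) + (if a = j then 1 else 0))
          = ∑ a : Fin (n+1), (s (Sum.inr a) + (if a = i then 1 else 0)) := by
        refine Finset.sum_congr rfl (fun a _ => ?_)
        by_cases h1 : a = i
        · subst h1
          have : a ≠ j := hij
          simp [this, hv1]
        · by_cases h2 : a = j
          · subst h2; simpa [h1] using hv2
          · simp [h1, h2, hv3 a h1 h2]
      rw [Finset.sum_add_distrib, Finset.sum_add_distrib, Finset.sum_ite_eq',
        Finset.sum_ite_eq'] at hsum
      simp at hsum
      omega
    have hm'' : (∑ a : Fin (n+1), (s'' (Sum.inr a) - s' (Sum.inr a))) ≤ N := by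
      have hlt : (∑ a : Fin (n+1), (s'' (Sum.inr a) - s' (Sum.inr a)))
          < ∑ a : Fin (n+1), (s (Sum.inr a) - s' (Sum.inr a)) := by
        refine Finset.sum_lt_sum (fun a _ => ?_) ⟨j, Finset.mem_univ j, ?_⟩
        · by_cases h1 : a = i
          · subst h1; omega
          · by_cases h2 : a = j
            · subst h2; omega
            · have := hv3 a h1 h2; omega
        · omega
      omega
    -- polynomial identities
    have hmw : (X (Sum.inl i) * X (Sum.inr j) : MvPolynomial (Fin (n+1) ⊕ Fin (n+1)) k)
        = monomial w 1 := by
      rw [X_eq_monomial, X_eq_monomial, monomial_mul, one_mul, hw]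
    have hmw' : (X (Sum.inl j) * X (Sum.inr i) : MvPolynomial (Fin (n+1) ⊕ Fin (n+1)) k)
        = monomial w' 1 := by
      rw [X_eq_monomial, X_eq_monomial, monomial_mul, one_mul, hw']
    have e1 : (monomial s (1:k)) = monomial u 1 * (X (Sum.inl i) * X (Sum.inr j)) := by
      rw [hmw, monomial_mul, one_mul, hs]
    have e2 : (monomial s'' (1:k)) = monomial u 1 * (X (Sum.inl j) * X (Sum.inr i)) := by
      rw [hmw', monomial_mul, one_mul, hs'']
    have hstep : (monomial s 1 - monomial s'' 1 : MvPolynomial (Fin (n+1) ⊕ Fin (n+1)) k)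
        ∈ Im k n := by
      rw [e1, e2, ← mul_sub]
      exact Ideal.mul_mem_left _ _ (minor_mem hij)
    have hrest := ih s'' s' hm'' hA'' hB''
    have hsplit : (monomial s 1 - monomial s' 1 : MvPolynomial (Fin (n+1) ⊕ Fin (n+1)) k)
        = (monomial s 1 - monomial s'' 1) + (monomial s'' 1 - monomial s' 1) := by ring
    rw [hsplit]
    exact Ideal.add_mem _ hstep hrest


lemma Im_le_ker :
    Im k n ≤ RingHom.ker ((aeval (Fm k n) : MvPolynomial (Fin (n+1) ⊕ Fin (n+1)) k →ₐ[k]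
      MvPolynomial (Option (Fin (n+1))) k) : MvPolynomial (Fin (n+1) ⊕ Fin (n+1)) k →+*
      MvPolynomial (Option (Fin (n+1))) k) := by
  rw [Im, Ideal.span_le]
  rintro f ⟨i, j, hij, rfl⟩
  simp only [SetLike.mem_coe, RingHom.mem_ker, RingHom.coe_coe, map_sub, map_mul, aeval_X, Fm,
    Sum.elim_inl, Sum.elim_inr]
  ring

lemma aeval_Fm_eq_zero {p : MvPolynomial (Fin (n+1) ⊕ Fin (n+1)) k} (hp : p ∈ Im k n) :
    aeval (Fm k n) p = 0 :=
  Im_le_ker hp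

lemma ker_le_Im :
    ∀ (N : ℕ) (f : MvPolynomial (Fin (n+1) ⊕ Fin (n+1)) k), f.support.card ≤ N →
      aeval (Fm k n) f = 0 → f ∈ Im k n := by
  intro N
  induction N with
  | zero =>
    intro f h hf
    have : f = 0 := by
      rw [← MvPolynomial.support_eq_empty, ← Finset.card_eq_zero]
      omega
    rw [this]
    exact Ideal.zero_mem _
  | succ N ih =>
    intro f hcard hker
    rcases eq_or_ne f 0 with rfl | h0
    · exact Ideal.zero_mem _
    obtain ⟨m, hm⟩ := support_nonempty.mpr h0
    set S := f.support.filter (fun s => cls n s = cls n m) with hS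
    have hSsub : S ⊆ f.support := Finset.filter_subset _ _
    have hmS : m ∈ S := Finset.mem_filter.mpr ⟨hm, rfl⟩
    have hSsum : (∑ s ∈ S, coeff s f) = 0 := by
      have h1 := coeff_aeval_Fm f (cls n m)
      rw [hker] at h1
      simpa [hS] using h1.symm
    have hsub : ∀ s ∈ S,
        (monomial s (coeff s f) - monomial m (coeff s f) : MvPolynomial _ k) ∈ Im k n := by
      intro s hs
      have hc : cls n s = cls n m := (Finset.mem_filter.mp hs).2
      have hA : ∀ a, s (Sum.inl a) + s (Sum.inr a) = m (Sum.inl a) + m (Sum.inr a) := by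
        intro a
        have := DFunLike.congr_fun hc (Option.some a)
        rwa [cls_some, cls_some] at this
      have hB : (∑ a : Fin (n+1), s (Sum.inr a)) = ∑ a : Fin (n+1), m (Sum.inr a) := by
        have := DFunLike.congr_fun hc none
        rwa [cls_none, cls_none] at this
      have h2 := monomial_sub_mem (k := k)
        (∑ a : Fin (n+1), (s (Sum.inr a) - m (Sum.inr a))) s m le_rfl hA hB
      have h3 : (monomial s (coeff s f) - monomial m (coeff s f) : MvPolynomial _ k)
          = C (coeff s f) * (monomial s 1 - monomial m 1) := by
        rw [mul_sub, C_mul_monomial, C_mul_monomial, mul_one]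
      rw [h3]
      exact Ideal.mul_mem_left _ _ h2
    set g := ∑ s ∈ S, (monomial s (coeff s f) - monomial m (coeff s f)) with hgdef
    have hgI : g ∈ Im k n := Ideal.sum_mem _ hsub
    have hg : g = ∑ s ∈ S, monomial s (coeff s f) := by
      rw [hgdef, Finset.sum_sub_distrib,
        ← map_sum (monomial m) (fun s => coeff s f) S, hSsum, map_zero, sub_zero]
    have hfg : f - g = ∑ s ∈ f.support \ S, monomial s (coeff s f) := by
      conv_lhs => rw [f.as_sum]
      rw [hg, ← Finset.sum_sdiff hSsub, add_sub_cancel_right]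
    have hcoeff : ∀ v, coeff v (f - g) = if v ∈ f.support \ S then coeff v f else 0 := by
      intro v
      rw [hfg, coeff_sum]
      simp_rw [coeff_monomial]
      rw [Finset.sum_ite_eq']
    have hsupp : (f - g).support ⊆ f.support \ S := by
      intro v hv
      by_contra hcon
      have h1 := hcoeff v
      rw [if_neg hcon] at h1
      exact (MvPolynomial.mem_support_iff.mp hv) h1
    have hcard2 : (f - g).support.card ≤ N := by
      have h1 := Finset.card_le_card hsupp
      have h2 : (f.support \ S).card = f.support.card - S.card := Finset.card_sdiff_of_subset hSsub
      have h3 : 1 ≤ S.card := Finset.card_pos.mpr ⟨m, hmS⟩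
      omega
    have hker2 : aeval (Fm k n) (f - g) = 0 := by
      rw [map_sub, hker, aeval_Fm_eq_zero hgI, sub_zero]
    have hmem := ih (f - g) hcard2 hker2
    have : f = (f - g) + g := by ring
    rw [this]
    exact Ideal.add_mem _ hmem hgI

end KerDiagAux


/-- Let `k` be a field and `n ≥ 1`. Let
`φ : k[x₀,…,xₙ,y₀,…,yₙ] → k[x₀,…,xₙ,t]` be the `k`-algebra map with `φ(xᵢ) = xᵢ` and
`φ(yᵢ) = t·xᵢ`.  The variables of the source are indexed by `Fin (n+1) ⊕ Fin (n+1)`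
(`Sum.inl i ↦ xᵢ`, `Sum.inr i ↦ yᵢ`) and those of the target by `Option (Fin (n+1))`
(`some i ↦ xᵢ`, `none ↦ t`).  Then `ker φ` is generated by the `2×2` minors
`xᵢyⱼ − xⱼyᵢ` for `i < j`. -/
theorem kernel_diagonal_map_eq_span_minors
    (k : Type*) [Field k] (n : ℕ) (hn : 1 ≤ n)
    (φ : MvPolynomial (Fin (n + 1) ⊕ Fin (n + 1)) k →ₐ[k] MvPolynomial (Option (Fin (n + 1))) k)
    (hφ : φ = MvPolynomial.aeval (Sum.elim
      (fun i => (X (some i) : MvPolynomial (Option (Fin (n + 1))) k))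
      (fun i => X none * X (some i)))) :
    RingHom.ker (φ : MvPolynomial (Fin (n + 1) ⊕ Fin (n + 1)) k →+*
        MvPolynomial (Option (Fin (n + 1))) k) =
      Ideal.span { f | ∃ i j : Fin (n + 1), i < j ∧
        f = X (Sum.inl i) * X (Sum.inr j) - X (Sum.inl j) * X (Sum.inr i) } := by
  subst hφ
  have hFm : (Sum.elim
      (fun i => (X (some i) : MvPolynomial (Option (Fin (n + 1))) k))
      (fun i => X none * X (some i))) = KerDiagAux.Fm k n := rfl
  rw [hFm]
  apply le_antisymm
  · intro f hf
    rw [RingHom.mem_ker] at hf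
    exact KerDiagAux.ker_le_Im f.support.card f le_rfl hf
  · exact KerDiagAux.Im_le_ker
end

section
/- Let k be a field and n ≥ 1. In the polynomial ring k[x₀,…,xₙ,y₀,…,yₙ], the ideal I generated by the 2×2 minors xᵢyⱼ − xⱼyᵢ for 0 ≤ i < j ≤ n is a prime ideal. -/
open MvPolynomial Finsupp

namespace SegreAux

variable {k : Type*} [Field k] {n : ℕ}

/-- exponent map on monomials -/
noncomputable def T (n : ℕ) (m : (Fin (n+1) ⊕ Fin (n+1)) →₀ ℕ) : (Fin 2 ⊕ Fin (n+1)) →₀ ℕ :=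
  Finsupp.equivFunOnFinite.symm
    (Sum.elim (fun j : Fin 2 => if j = 0 then ∑ i, m (Sum.inl i) else ∑ i, m (Sum.inr i))
      (fun i => m (Sum.inl i) + m (Sum.inr i)))

lemma T_inl0 (m : (Fin (n+1) ⊕ Fin (n+1)) →₀ ℕ) :
    T n m (Sum.inl 0) = ∑ i, m (Sum.inl i) := by simp [T]

lemma T_inr (m : (Fin (n+1) ⊕ Fin (n+1)) →₀ ℕ) (i : Fin (n+1)) :
    T n m (Sum.inr i) = m (Sum.inl i) + m (Sum.inr i) := by simp [T]

/-- the ideal of 2×2 minors -/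
noncomputable def mI (k : Type*) [Field k] (n : ℕ) : Ideal (MvPolynomial (Fin (n+1) ⊕ Fin (n+1)) k) :=
  Ideal.span { f : MvPolynomial (Fin (n + 1) ⊕ Fin (n + 1)) k |
        ∃ i j : Fin (n + 1), i < j ∧
          f = X (Sum.inl i) * X (Sum.inr j) - X (Sum.inl j) * X (Sum.inr i) }

lemma gen_mem {i j : Fin (n+1)} (hij : i ≠ j) :
    X (Sum.inl i) * X (Sum.inr j) - X (Sum.inl j) * X (Sum.inr i) ∈ mI k n := by
  rcases hij.lt_or_gt with h | h
  · exact Ideal.subset_span ⟨i, j, h, rfl⟩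
  · have : X (Sum.inl i) * X (Sum.inr j) - X (Sum.inl j) * X (Sum.inr i) =
      -((X (Sum.inl j) * X (Sum.inr i) - X (Sum.inl i) * X (Sum.inr j)) :
        MvPolynomial (Fin (n+1) ⊕ Fin (n+1)) k) := by ring
    rw [this]
    exact neg_mem (Ideal.subset_span ⟨j, i, h, rfl⟩)

lemma monomial_add_single_mul (p : (Fin (n+1) ⊕ Fin (n+1)) →₀ ℕ)
    (a b : Fin (n+1) ⊕ Fin (n+1)) :
    monomial (p + Finsupp.single a 1 + Finsupp.single b 1) (1:k)
      = monomial p 1 * (X a * X b) := by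
  rw [X, X, monomial_mul, monomial_mul, one_mul, one_mul, add_assoc]

lemma swap_mem (p : (Fin (n+1) ⊕ Fin (n+1)) →₀ ℕ) {i j : Fin (n+1)} (hij : i ≠ j) :
    monomial (p + Finsupp.single (Sum.inl i) 1 + Finsupp.single (Sum.inr j) 1) (1:k)
      - monomial (p + Finsupp.single (Sum.inl j) 1 + Finsupp.single (Sum.inr i) 1) 1 ∈ mI k n := by
  rw [monomial_add_single_mul, monomial_add_single_mul, ← mul_sub]
  exact Ideal.mul_mem_left _ _ (gen_mem hij)

lemma cong (N : ℕ) : ∀ m m' : (Fin (n+1) ⊕ Fin (n+1)) →₀ ℕ,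
    (∑ i, Nat.dist (m (Sum.inl i)) (m' (Sum.inl i))) ≤ N → T n m = T n m' →
    monomial m (1:k) - monomial m' 1 ∈ mI k n := by
  induction N with
  | zero =>
    intro m m' hN hT
    have hx : ∀ i, m (Sum.inl i) = m' (Sum.inl i) := by
      intro i
      have := Finset.sum_eq_zero_iff.mp (Nat.le_zero.mp hN) i (Finset.mem_univ i)
      exact Nat.eq_of_dist_eq_zero this
    have hy : ∀ i, m (Sum.inr i) = m' (Sum.inr i) := by
      intro i
      have h : T n m (Sum.inr i) = T n m' (Sum.inr i) := by rw [hT]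
      rw [T_inr, T_inr] at h
      have := hx i
      omega
    have : m = m' := by
      ext a
      rcases a with a | a
      · exact hx a
      · exact hy a
    rw [this, sub_self]
    exact zero_mem _
  | succ N ih =>
    intro m m' hN hT
    have hTfun : ∀ b, T n m b = T n m' b := fun b => by rw [hT]
    have hinr : ∀ t, m (Sum.inl t) + m (Sum.inr t) = m' (Sum.inl t) + m' (Sum.inr t) := by
      intro t; have := hTfun (Sum.inr t); simpa [T_inr] using this
    by_cases hall : ∀ t, m (Sum.inl t) = m' (Sum.inl t)
    · have : m = m' := by
        ext a
        rcases a with a | a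
        · exact hall a
        · have := hinr a; have := hall a; omega
      rw [this, sub_self]; exact zero_mem _
    · push_neg at hall
      obtain ⟨t0, ht0⟩ := hall
      have hsum : ∑ t, m (Sum.inl t) = ∑ t, m' (Sum.inl t) := by
        have := hTfun (Sum.inl 0); simpa [T_inl0] using this
      have hexi : ∃ i, m' (Sum.inl i) < m (Sum.inl i) := by
        by_contra h
        push_neg at h
        have hlt : ∑ t, m (Sum.inl t) < ∑ t, m' (Sum.inl t) :=
          Finset.sum_lt_sum (fun t _ => h t) ⟨t0, Finset.mem_univ t0, lt_of_le_of_ne (h t0) ht0⟩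
        omega
      have hexj : ∃ j, m (Sum.inl j) < m' (Sum.inl j) := by
        by_contra h
        push_neg at h
        obtain ⟨i, hi⟩ := hexi
        have hlt : ∑ t, m' (Sum.inl t) < ∑ t, m (Sum.inl t) :=
          Finset.sum_lt_sum (fun t _ => h t) ⟨i, Finset.mem_univ i, hi⟩
        omega
      obtain ⟨i, hi⟩ := hexi
      obtain ⟨j, hj⟩ := hexj
      have hij : i ≠ j := by
        intro h; rw [h] at hi; omega
      have hxi : 1 ≤ m (Sum.inl i) := by omega
      have hyj : 1 ≤ m (Sum.inr j) := by have := hinr j; omega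
      set p : (Fin (n+1) ⊕ Fin (n+1)) →₀ ℕ :=
        m - Finsupp.single (Sum.inl i) 1 - Finsupp.single (Sum.inr j) 1 with hp
      set m'' : (Fin (n+1) ⊕ Fin (n+1)) →₀ ℕ :=
        p + Finsupp.single (Sum.inl j) 1 + Finsupp.single (Sum.inr i) 1 with hm''
      have hpval : ∀ a, p a = m a - (if Sum.inl i = a then 1 else 0) - (if Sum.inr j = a then 1 else 0) := by
        intro a
        simp [hp, Finsupp.tsub_apply, Finsupp.single_apply]
      have hm''val : ∀ a, m'' a = p a + (if Sum.inl j = a then 1 else 0) + (if Sum.inr i = a then 1 else 0) := by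
        intro a
        simp [hm'', Finsupp.add_apply, Finsupp.single_apply]
      have e1 : m'' (Sum.inl i) + 1 = m (Sum.inl i) := by
        rw [hm''val, hpval]; simp [hij, (Ne.symm hij)]; omega
      have e2 : m'' (Sum.inl j) = m (Sum.inl j) + 1 := by
        rw [hm''val, hpval]; simp [hij, (Ne.symm hij)]
      have e3 : ∀ t, t ≠ i → t ≠ j → m'' (Sum.inl t) = m (Sum.inl t) := by
        intro t h1 h2
        rw [hm''val, hpval]
        simp [Sum.inl.injEq, Ne.symm h1, Ne.symm h2]
      have f1 : m'' (Sum.inr i) = m (Sum.inr i) + 1 := by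
        rw [hm''val, hpval]; simp [hij, (Ne.symm hij)]
      have f2 : m'' (Sum.inr j) + 1 = m (Sum.inr j) := by
        rw [hm''val, hpval]; simp [hij, (Ne.symm hij)]; omega
      have f3 : ∀ t, t ≠ i → t ≠ j → m'' (Sum.inr t) = m (Sum.inr t) := by
        intro t h1 h2
        rw [hm''val, hpval]
        simp [Sum.inr.injEq, Ne.symm h1, Ne.symm h2]
      -- m decomposes
      have hmdec : m = p + Finsupp.single (Sum.inl i) 1 + Finsupp.single (Sum.inr j) 1 := by
        ext a
        simp only [Finsupp.add_apply, hpval a, Finsupp.single_apply]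
        rcases a with a | a
        · by_cases h : i = a
          · subst h; simp; omega
          · simp [h, Sum.inl.injEq]
        · by_cases h : j = a
          · subst h; simp; omega
          · simp [h, Sum.inr.injEq]
      -- T m'' = T m
      have hT'' : T n m'' = T n m := by
        ext b
        rcases b with b | t
        · have hb : b = 0 ∨ b = 1 := by omega
          rcases hb with hb | hb <;> subst hb
          · rw [T_inl0, T_inl0]
            have key : ∀ t, m'' (Sum.inl t) + (if t = i then 1 else 0)
                = m (Sum.inl t) + (if t = j then 1 else 0) := by
              intro t
              by_cases h1 : t = i
              · subst h1; simp [hij]; omega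
              · by_cases h2 : t = j
                · subst h2; simp [h1]; omega
                · simp [h1, h2, e3 t h1 h2]
            have hsk := Finset.sum_congr rfl (fun t (_ : t ∈ Finset.univ) => key t)
            rw [Finset.sum_add_distrib, Finset.sum_add_distrib] at hsk
            simp only [Finset.sum_ite_eq' Finset.univ, Finset.mem_univ, if_true] at hsk
            omega
          · have T1 : ∀ mm : (Fin (n+1) ⊕ Fin (n+1)) →₀ ℕ, T n mm (Sum.inl 1) = ∑ i, mm (Sum.inr i) := by
              intro mm; simp [T]
            rw [T1, T1]
            have key : ∀ t, m'' (Sum.inr t) + (if t = j then 1 else 0)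
                = m (Sum.inr t) + (if t = i then 1 else 0) := by
              intro t
              by_cases h1 : t = i
              · subst h1; simp [hij, Ne.symm hij]; omega
              · by_cases h2 : t = j
                · subst h2; simp [h1]; omega
                · simp [h1, h2, f3 t h1 h2]
            have hsk := Finset.sum_congr rfl (fun t (_ : t ∈ Finset.univ) => key t)
            rw [Finset.sum_add_distrib, Finset.sum_add_distrib] at hsk
            simp only [Finset.sum_ite_eq' Finset.univ, Finset.mem_univ, if_true] at hsk
            omega
        · rw [T_inr, T_inr]
          by_cases h1 : t = i
          · subst h1; omega
          · by_cases h2 : t = j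
            · subst h2; omega
            · rw [e3 t h1 h2, f3 t h1 h2]
      -- distance decreases
      have hdist : ∑ t, Nat.dist (m'' (Sum.inl t)) (m' (Sum.inl t)) < 
          ∑ t, Nat.dist (m (Sum.inl t)) (m' (Sum.inl t)) := by
        apply Finset.sum_lt_sum
        · intro t _
          by_cases h1 : t = i
          · subst h1; simp [Nat.dist]; omega
          · by_cases h2 : t = j
            · subst h2; simp [Nat.dist]; omega
            · rw [e3 t h1 h2]
        · exact ⟨i, Finset.mem_univ i, by simp [Nat.dist]; omega⟩
      have step1 : monomial m (1:k) - monomial m'' 1 ∈ mI k n := by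
        rw [hmdec, hm'']
        exact swap_mem p hij
      have step2 : monomial m'' (1:k) - monomial m' 1 ∈ mI k n :=
        ih m'' m' (by omega) (hT''.trans hT)
      have : monomial m (1:k) - monomial m' 1
          = (monomial m 1 - monomial m'' 1) + (monomial m'' 1 - monomial m' 1) := by ring
      rw [this]
      exact add_mem step1 step2


lemma T_inl1' (m : (Fin (n+1) ⊕ Fin (n+1)) →₀ ℕ) :
    T n m (Sum.inl 1) = ∑ i, m (Sum.inr i) := by simp [T]

lemma T_add (m₁ m₂ : (Fin (n+1) ⊕ Fin (n+1)) →₀ ℕ) :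
    T n (m₁ + m₂) = T n m₁ + T n m₂ := by
  ext b
  rcases b with b | t
  · have hb : b = 0 ∨ b = 1 := by omega
    rcases hb with hb | hb <;> subst hb <;>
      simp [T_inl0, T_inl1', Finsupp.add_apply, Finset.sum_add_distrib]
  · simp only [Finsupp.add_apply, T_inr]; ring

lemma T_zero : T n (0 : (Fin (n+1) ⊕ Fin (n+1)) →₀ ℕ) = 0 := by
  ext b
  rcases b with b | t
  · have hb : b = 0 ∨ b = 1 := by omega
    rcases hb with hb | hb <;> subst hb <;> simp [T_inl0, T_inl1']
  · simp [T_inr]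

/-- the Segre homomorphism -/
noncomputable def phi (k : Type*) [Field k] (n : ℕ) :
    MvPolynomial (Fin (n+1) ⊕ Fin (n+1)) k →ₐ[k] MvPolynomial (Fin 2 ⊕ Fin (n+1)) k :=
  aeval (Sum.elim (fun i => X (Sum.inl 0) * X (Sum.inr i))
    (fun i => X (Sum.inl 1) * X (Sum.inr i)))

lemma phi_single (a : Fin (n+1) ⊕ Fin (n+1)) (b : ℕ) :
    phi k n (monomial (Finsupp.single a b) 1) = monomial (T n (Finsupp.single a b)) 1 := by
  rcases a with i | i
  · have h1 : T n (Finsupp.single (Sum.inl i) b)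
        = Finsupp.single (Sum.inl 0) b + Finsupp.single (Sum.inr i) b := by
      ext x
      rcases x with x | t
      · have hb : x = 0 ∨ x = 1 := by omega
        rcases hb with hb | hb <;> subst hb <;>
          simp [T_inl0, T_inl1', Finsupp.single_apply, Finsupp.add_apply]
      · simp [T_inr, Finsupp.single_apply, Finsupp.add_apply]
    rw [h1, ← X_pow_eq_monomial, map_pow]
    simp only [phi, aeval_X, Sum.elim_inl]
    rw [mul_pow, X_pow_eq_monomial, X_pow_eq_monomial, monomial_mul, one_mul]
  · have h1 : T n (Finsupp.single (Sum.inr i) b)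
        = Finsupp.single (Sum.inl 1) b + Finsupp.single (Sum.inr i) b := by
      ext x
      rcases x with x | t
      · have hb : x = 0 ∨ x = 1 := by omega
        rcases hb with hb | hb <;> subst hb <;>
          simp [T_inl0, T_inl1', Finsupp.single_apply, Finsupp.add_apply]
      · simp [T_inr, Finsupp.single_apply, Finsupp.add_apply]
    rw [h1, ← X_pow_eq_monomial, map_pow]
    simp only [phi, aeval_X, Sum.elim_inr]
    rw [mul_pow, X_pow_eq_monomial, X_pow_eq_monomial, monomial_mul, one_mul]

lemma phi_monomial (m : (Fin (n+1) ⊕ Fin (n+1)) →₀ ℕ) (c : k) :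
    phi k n (monomial m c) = monomial (T n m) c := by
  induction m using Finsupp.induction with
  | zero => simp [T_zero, monomial_zero', phi, algebraMap_eq]
  | single_add a b f _ _ ihf =>
    have hsplit : monomial (Finsupp.single a b + f) c
        = monomial (Finsupp.single a b) 1 * monomial f c := by
      rw [monomial_mul, one_mul]
    rw [hsplit, map_mul, phi_single, ihf, monomial_mul, one_mul, T_add]

lemma phi_gen (i j : Fin (n+1)) :
    phi k n (X (Sum.inl i) * X (Sum.inr j) - X (Sum.inl j) * X (Sum.inr i)) = 0 := by
  simp only [phi, map_sub, map_mul, aeval_X, Sum.elim_inl, Sum.elim_inr]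
  ring

theorem mI_isPrime (k : Type*) [Field k] (n : ℕ) : (mI k n).IsPrime := by
  classical
  have heq : mI k n = RingHom.ker (phi k n) := by
    apply le_antisymm
    · rw [mI, Ideal.span_le]
      rintro f ⟨i, j, hij, rfl⟩
      rw [SetLike.mem_coe, RingHom.mem_ker]
      exact phi_gen i j
    · intro f hf
      rw [RingHom.mem_ker] at hf
      set r : ((Fin 2 ⊕ Fin (n+1)) →₀ ℕ) → ((Fin (n+1) ⊕ Fin (n+1)) →₀ ℕ) :=
        fun t => if h : ∃ m', T n m' = t then h.choose else 0 with hrdef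
      have hr : ∀ m, T n (r (T n m)) = T n m := by
        intro m
        have h : ∃ m', T n m' = T n m := ⟨m, rfl⟩
        simp only [hrdef, dif_pos h]
        exact h.choose_spec
      set f' : MvPolynomial (Fin (n+1) ⊕ Fin (n+1)) k :=
        ∑ m ∈ f.support, monomial (r (T n m)) (coeff m f) with hf'def
      have h1 : f - f' ∈ mI k n := by
        have hdiff : f - f' = ∑ m ∈ f.support,
            (monomial m (coeff m f) - monomial (r (T n m)) (coeff m f)) := by
          rw [Finset.sum_sub_distrib, support_sum_monomial_coeff]
        rw [hdiff]
        apply Ideal.sum_mem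
        intro m _
        have hfac : monomial m (coeff m f) - monomial (r (T n m)) (coeff m f)
            = C (coeff m f) * (monomial m 1 - monomial (r (T n m)) 1) := by
          rw [mul_sub, C_mul_monomial, C_mul_monomial, mul_one]
        rw [hfac]
        exact Ideal.mul_mem_left _ _
          (cong (∑ i, Nat.dist (m (Sum.inl i)) ((r (T n m)) (Sum.inl i))) m (r (T n m))
            le_rfl (hr m).symm)
      have h2 : f' = 0 := by
        apply MvPolynomial.ext
        intro t
        rw [coeff_zero, hf'def, MvPolynomial.coeff_sum]
        simp only [coeff_monomial]
        by_cases hex : ∃ m₀ ∈ f.support, r (T n m₀) = t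
        · obtain ⟨m₀, _, hm₀⟩ := hex
          have hphi : coeff (T n m₀) (phi k n f) = 0 := by rw [hf, coeff_zero]
          have hcoe : coeff (T n m₀) (phi k n f)
              = ∑ m ∈ f.support, (if T n m = T n m₀ then coeff m f else 0) := by
            conv_lhs => rw [← support_sum_monomial_coeff f]
            rw [map_sum, MvPolynomial.coeff_sum]
            simp only [phi_monomial, coeff_monomial]
          rw [hcoe] at hphi
          refine Eq.trans (Finset.sum_congr rfl ?_) hphi
          intro m _
          have hiff : (r (T n m) = t) ↔ (T n m = T n m₀) := by
            constructor
            · intro h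
              have : r (T n m) = r (T n m₀) := by rw [h, hm₀]
              calc T n m = T n (r (T n m)) := (hr m).symm
                _ = T n (r (T n m₀)) := by rw [this]
                _ = T n m₀ := hr m₀
            · intro h
              rw [← hm₀]
              exact congrArg r h
          exact if_congr hiff rfl rfl
        · push_neg at hex
          apply Finset.sum_eq_zero
          intro m hm
          rw [if_neg (hex m hm)]
      have : f = f - f' := by rw [h2, sub_zero]
      rw [this]
      exact h1
  rw [heq]
  exact RingHom.ker_isPrime _

end SegreAux

/-- Let `k` be a field and `n ≥ 1`. In the polynomial ring
`k[x₀,…,xₙ,y₀,…,yₙ]` (variables indexed by `Fin (n+1) ⊕ Fin (n+1)`, with `Sum.inl i ↦ xᵢ`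
and `Sum.inr i ↦ yᵢ`), the ideal generated by the `2×2` minors `xᵢyⱼ − xⱼyᵢ` for
`0 ≤ i < j ≤ n` is prime. -/
theorem span_minors_isPrime
    (k : Type*) [Field k] (n : ℕ) (hn : 1 ≤ n) :
    (Ideal.span { f : MvPolynomial (Fin (n + 1) ⊕ Fin (n + 1)) k |
        ∃ i j : Fin (n + 1), i < j ∧
          f = X (Sum.inl i) * X (Sum.inr j) - X (Sum.inl j) * X (Sum.inr i) }).IsPrime :=
  SegreAux.mI_isPrime k n
end

section
/- Let k be a field and let A be the k-subalgebra of the polynomial ring k[x₀,x₁,x₂,t] generated by the six elements x₀, x₁, x₂, t·x₀, t·x₁, t²·x₂. Then: (1) t·x₂ lies in the fraction field of A (indeed t·x₂ = (t·x₀ · x₂)/x₀); (2) t·x₂ is integral over A, satisfying the monic equation (t·x₂)² − x₂·(t²·x₂) = 0 whose coefficients x₂ and t²·x₂ lie in A; (3) t·x₂ ∉ A. Consequently A is not integrally closed in its field of fractions. -/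
open MvPolynomial

section Aux

variable (k : Type*) [Field k]

/-- The subalgebra of polynomials all of whose monomials `m` satisfy:
if `m 0 = 0` and `m 1 = 0` then `m 3` is even. -/
def goodSub : Subalgebra k (MvPolynomial (Fin 4) k) where
  carrier := {p | ∀ m ∈ p.support, m 0 = 0 → m 1 = 0 → Even (m 3)}
  add_mem' := by
    intro p q hp hq m hm h0 h1
    classical
    rcases Finset.mem_union.mp (MvPolynomial.support_add hm) with h | h
    · exact hp m h h0 h1
    · exact hq m h h0 h1
  mul_mem' := by
    intro p q hp hq m hm h0 h1
    classical
    rcases Finset.mem_add.mp (MvPolynomial.support_mul p q hm) with ⟨u, hu, v, hv, rfl⟩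
    have hu0 : u 0 = 0 ∧ v 0 = 0 := by
      constructor <;> · simp only [Finsupp.add_apply] at h0; omega
    have hu1 : u 1 = 0 ∧ v 1 = 0 := by
      constructor <;> · simp only [Finsupp.add_apply] at h1; omega
    have h3 : (u + v) 3 = u 3 + v 3 := rfl
    rw [h3]
    exact (hp u hu hu0.1 hu1.1).add (hq v hv hu0.2 hu1.2)
  algebraMap_mem' := by
    intro a m hm _ _
    classical
    have hC : (algebraMap k (MvPolynomial (Fin 4) k) a) = monomial 0 a := by
      rw [MvPolynomial.algebraMap_eq]; rfl
    rw [hC] at hm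
    have h0 := MvPolynomial.support_monomial_subset hm
    rw [Finset.mem_singleton] at h0
    subst h0
    exact Even.zero

theorem mono_mem_goodSub (u : Fin 4 →₀ ℕ) (h : u 0 = 0 → u 1 = 0 → Even (u 3)) :
    (monomial u (1 : k)) ∈ goodSub k := by
  intro m hm h0 h1
  classical
  rw [MvPolynomial.support_monomial, if_neg one_ne_zero, Finset.mem_singleton] at hm
  subst hm
  exact h h0 h1

theorem X_eq_monomial (i : Fin 4) :
    (X i : MvPolynomial (Fin 4) k) = monomial (Finsupp.single i 1) 1 := rfl

theorem X_mul_X_eq (i j : Fin 4) :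
    (X i * X j : MvPolynomial (Fin 4) k)
      = monomial (Finsupp.single i 1 + Finsupp.single j 1) 1 := by
  rw [X_eq_monomial, X_eq_monomial, monomial_mul, mul_one]

theorem X3_mul_X2_notMem_goodSub : (X 3 * X 2 : MvPolynomial (Fin 4) k) ∉ goodSub k := by
  intro h
  classical
  have hsupp : (Finsupp.single 3 1 + Finsupp.single 2 1 : Fin 4 →₀ ℕ)
      ∈ (X 3 * X 2 : MvPolynomial (Fin 4) k).support := by
    rw [X_mul_X_eq, MvPolynomial.support_monomial, if_neg one_ne_zero]
    exact Finset.mem_singleton_self _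
  have := h _ hsupp (by simp [Finsupp.single_apply]) (by simp [Finsupp.single_apply])
  simp [Finsupp.single_apply, Nat.even_iff] at this

end Aux

set_option maxHeartbeats 1000000 in
set_option synthInstance.maxHeartbeats 400000 in
/-- Let `k` be a field and `A ⊆ k[x₀,x₁,x₂,t]` the `k`-subalgebra generated
by `x₀, x₁, x₂, t·x₀, t·x₁, t²·x₂` (the polynomial ring has variables indexed by `Fin 4`,
with `X 0 = x₀`, `X 1 = x₁`, `X 2 = x₂`, `X 3 = t`).  Then:
(1) `t·x₂` lies in the fraction field of `A`: indeed `x₀ · (t·x₂) = (t·x₀)·x₂` with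
    `x₀ ≠ 0` and both `x₀` and `(t·x₀)·x₂` in `A`;
(2) `t·x₂` is integral over `A`: it satisfies `(t·x₂)² − x₂·(t²·x₂) = 0`, and the
    coefficients `x₂` and `t²·x₂` lie in `A`;
(3) `t·x₂ ∉ A`.
Consequently `A` is not integrally closed in its field of fractions. -/
theorem adjoin_P112_diagonal_not_integrallyClosed
    (k : Type*) [Field k]
    (A : Subalgebra k (MvPolynomial (Fin 4) k))
    (hA : A = Algebra.adjoin k
      {X 0, X 1, X 2, X 3 * X 0, X 3 * X 1, X 3 ^ 2 * X 2}) :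
    ((X 0 : MvPolynomial (Fin 4) k) ≠ 0 ∧ (X 0 : MvPolynomial (Fin 4) k) ∈ A ∧
        (X 3 * X 0) * X 2 ∈ A ∧
        X 0 * (X 3 * X 2) = (X 3 * X 0) * (X 2 : MvPolynomial (Fin 4) k)) ∧
      ((X 3 * X 2 : MvPolynomial (Fin 4) k) ^ 2 - X 2 * (X 3 ^ 2 * X 2) = 0 ∧
        (X 2 : MvPolynomial (Fin 4) k) ∈ A ∧ (X 3 ^ 2 * X 2 : MvPolynomial (Fin 4) k) ∈ A) ∧
      (X 3 * X 2 : MvPolynomial (Fin 4) k) ∉ A ∧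
      ¬ IsIntegrallyClosed A := by
  subst hA
  set S : Set (MvPolynomial (Fin 4) k) :=
    {X 0, X 1, X 2, X 3 * X 0, X 3 * X 1, X 3 ^ 2 * X 2} with hS
  have hX0 : (X 0 : MvPolynomial (Fin 4) k) ∈ Algebra.adjoin k S :=
    Algebra.subset_adjoin (by simp [hS])
  have hX2 : (X 2 : MvPolynomial (Fin 4) k) ∈ Algebra.adjoin k S :=
    Algebra.subset_adjoin (by simp [hS])
  have hX3X0 : (X 3 * X 0 : MvPolynomial (Fin 4) k) ∈ Algebra.adjoin k S :=
    Algebra.subset_adjoin (by simp [hS])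
  have hX32X2 : (X 3 ^ 2 * X 2 : MvPolynomial (Fin 4) k) ∈ Algebra.adjoin k S :=
    Algebra.subset_adjoin (by simp [hS])
  -- (3): `t·x₂ ∉ A`.
  have hle : Algebra.adjoin k S ≤ goodSub k := by
    apply Algebra.adjoin_le
    intro p hp
    simp only [hS, Set.mem_insert_iff, Set.mem_singleton_iff] at hp
    rcases hp with rfl | rfl | rfl | rfl | rfl | rfl
    · rw [X_eq_monomial]
      exact mono_mem_goodSub k _ (by simp [Finsupp.single_apply])
    · rw [X_eq_monomial]
      exact mono_mem_goodSub k _ (by simp [Finsupp.single_apply])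
    · rw [X_eq_monomial]
      exact mono_mem_goodSub k _ (by simp [Finsupp.single_apply])
    · rw [X_mul_X_eq]
      exact mono_mem_goodSub k _ (by simp [Finsupp.single_apply])
    · rw [X_mul_X_eq]
      exact mono_mem_goodSub k _ (by simp [Finsupp.single_apply])
    · rw [X_pow_eq_monomial, X_eq_monomial, monomial_mul, mul_one]
      exact mono_mem_goodSub k _ (by simp [Finsupp.single_apply])
  have hnot : (X 3 * X 2 : MvPolynomial (Fin 4) k) ∉ Algebra.adjoin k S := fun h =>
    X3_mul_X2_notMem_goodSub k (hle h)
  refine ⟨⟨MvPolynomial.X_ne_zero 0, hX0, mul_mem hX3X0 hX2, by ring⟩,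
    ⟨by ring, hX2, hX32X2⟩, hnot, ?_⟩
  -- Not integrally closed.
  intro hIC
  set A := Algebra.adjoin k S
  letI : IsDomain A := inferInstance
  let K := FractionRing A
  let a : A := ⟨X 0, hX0⟩
  let b : A := ⟨(X 3 * X 0) * X 2, mul_mem hX3X0 hX2⟩
  let c : A := ⟨X 2 * (X 3 ^ 2 * X 2), mul_mem hX2 hX32X2⟩
  have ha : (algebraMap A K) a ≠ 0 := by
    rw [map_ne_zero_iff _ (IsFractionRing.injective A K)]
    exact fun h => MvPolynomial.X_ne_zero 0 (congrArg Subtype.val h)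
  have hb2 : b ^ 2 = a ^ 2 * c := by
    apply Subtype.ext
    show ((X 3 * X 0) * X 2 : MvPolynomial (Fin 4) k) ^ 2
      = (X 0 : MvPolynomial (Fin 4) k) ^ 2 * (X 2 * (X 3 ^ 2 * X 2))
    ring
  set x : K := algebraMap A K b / algebraMap A K a with hx
  have hxsq : x ^ 2 = algebraMap A K c := by
    rw [hx, div_pow, ← map_pow, ← map_pow, hb2, map_mul, mul_comm, mul_div_assoc,
      div_self (by rw [map_pow]; exact pow_ne_zero 2 ha), mul_one]
  have hint : IsIntegral A x := by
    refine ⟨Polynomial.X ^ 2 - Polynomial.C c, Polynomial.monic_X_pow_sub_C c (by norm_num), ?_⟩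
    simp [Polynomial.eval₂_sub, hxsq]
  obtain ⟨y, hy⟩ := (isIntegrallyClosed_iff K).mp hIC hint
  have hya : algebraMap A K (y * a) = algebraMap A K b := by
    rw [map_mul, hy, hx, div_mul_cancel₀ _ ha]
  have hyab : y * a = b := IsFractionRing.injective A K hya
  have : (y : MvPolynomial (Fin 4) k) * X 0 = (X 3 * X 0) * X 2 :=
    congrArg Subtype.val hyab
  have hyval : (y : MvPolynomial (Fin 4) k) = X 3 * X 2 := by
    have h2 : (X 0 : MvPolynomial (Fin 4) k) * (y : MvPolynomial (Fin 4) k)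
        = X 0 * (X 3 * X 2) := by rw [mul_comm, this]; ring
    exact mul_left_cancel₀ (MvPolynomial.X_ne_zero 0) h2
  exact hnot (hyval ▸ y.2)
end

section
/- Let k be a field, T = k[x₀,x₁,x₂,y₀,y₁,y₂] the polynomial ring in 6 variables, and ψ : T → k[x₀,x₁,x₂,t] the k-algebra homomorphism with ψ(xᵢ) = xᵢ for i = 0,1,2, ψ(y₀) = t·x₀, ψ(y₁) = t·x₁, ψ(y₂) = t²·x₂. Consider the T-module homomorphism π : T² → k[x₀,x₁,x₂,t] (where k[x₀,x₁,x₂,t] is a T-module via ψ) given by π(f,g) = ψ(f)·1 + ψ(g)·(t·x₂). Then the kernel of π is generated as a T-module by the five elements (x₁y₀ − x₀y₁, 0), (x₂y₀, −x₀), (x₂y₁, −x₁), (x₀y₂, −y₀), (x₁y₂, −y₁). -/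
open MvPolynomial

noncomputable section Aux
variable (k : Type*) [Field k]

def psi0 : MvPolynomial (Fin 6) k →ₐ[k] MvPolynomial (Fin 4) k :=
  aeval ![X 0, X 1, X 2, X 3 * X 0, X 3 * X 1, X 3 ^ 2 * X 2]

variable {k}

def Phi (m : Fin 6 →₀ ℕ) : Fin 4 →₀ ℕ :=
  Finsupp.single 0 (m 0 + m 3) + Finsupp.single 1 (m 1 + m 4) +
    Finsupp.single 2 (m 2 + m 5) + Finsupp.single 3 (m 3 + m 4 + 2 * m 5)

lemma Phi_apply (m : Fin 6 →₀ ℕ) :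
    Phi m 0 = m 0 + m 3 ∧ Phi m 1 = m 1 + m 4 ∧ Phi m 2 = m 2 + m 5 ∧
      Phi m 3 = m 3 + m 4 + 2 * m 5 := by
  refine ⟨?_, ?_, ?_, ?_⟩ <;> simp [Phi, Finsupp.single_apply]

lemma Phi_add (a b : Fin 6 →₀ ℕ) : Phi (a + b) = Phi a + Phi b := by
  ext j
  fin_cases j <;>
    simp [Phi, Finsupp.single_apply, Finsupp.add_apply] <;> ring

lemma Phi_zero : Phi 0 = 0 := by
  ext j; fin_cases j <;> simp [Phi]

lemma Phi_single (b : ℕ) :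
    Phi (.single 0 b) = .single 0 b ∧ Phi (.single 1 b) = .single 1 b ∧
    Phi (.single 2 b) = .single 2 b ∧
    Phi (.single 3 b) = Finsupp.single 0 b + .single 3 b ∧
    Phi (.single 4 b) = Finsupp.single 1 b + .single 3 b ∧
    Phi (.single 5 b) = Finsupp.single 2 b + .single 3 (2 * b) := by
  refine ⟨?_, ?_, ?_, ?_, ?_, ?_⟩ <;>
    (ext j; fin_cases j <;> simp [Phi, Finsupp.single_apply])

lemma psi0_X_pow (i : Fin 6) (b : ℕ) :
    psi0 k (X i) ^ b = monomial (Phi (Finsupp.single i b)) 1 := by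
  obtain ⟨h0, h1, h2, h3, h4, h5⟩ := Phi_single b
  fin_cases i
  · show psi0 k (X 0) ^ b = monomial (Phi (Finsupp.single 0 b)) 1
    rw [show psi0 k (X 0) = X 0 by simp [psi0], h0, X_pow_eq_monomial]
  · show psi0 k (X 1) ^ b = monomial (Phi (Finsupp.single 1 b)) 1
    rw [show psi0 k (X 1) = X 1 by simp [psi0], h1, X_pow_eq_monomial]
  · show psi0 k (X 2) ^ b = monomial (Phi (Finsupp.single 2 b)) 1
    rw [show psi0 k (X 2) = X 2 by simp [psi0], h2, X_pow_eq_monomial]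
  · show psi0 k (X 3) ^ b = monomial (Phi (Finsupp.single 3 b)) 1
    rw [show psi0 k (X 3) = X 3 * X 0 by simp [psi0], h3, mul_pow,
      X_pow_eq_monomial, X_pow_eq_monomial, monomial_mul, one_mul, add_comm]
  · show psi0 k (X 4) ^ b = monomial (Phi (Finsupp.single 4 b)) 1
    rw [show psi0 k (X 4) = X 3 * X 1 by simp [psi0], h4, mul_pow,
      X_pow_eq_monomial, X_pow_eq_monomial, monomial_mul, one_mul, add_comm]
  · show psi0 k (X 5) ^ b = monomial (Phi (Finsupp.single 5 b)) 1
    rw [show psi0 k (X 5) = X 3 ^ 2 * X 2 by simp only [psi0, aeval_X]; rfl, h5,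
      mul_pow, ← pow_mul, X_pow_eq_monomial, X_pow_eq_monomial, monomial_mul,
      one_mul, add_comm]

lemma psi0_monomial (m : Fin 6 →₀ ℕ) (c : k) :
    psi0 k (monomial m c) = monomial (Phi m) c := by
  induction m using Finsupp.induction with
  | zero =>
      rw [monomial_zero', Phi_zero, monomial_zero']
      simp [psi0]
  | single_add i b s his hb ih =>
      have h : (monomial (Finsupp.single i b + s) c : MvPolynomial (Fin 6) k)
          = monomial (Finsupp.single i b) 1 * monomial s c := by
        rw [monomial_mul, one_mul]
      rw [h, map_mul, ih, ← X_pow_eq_monomial, map_pow, psi0_X_pow,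
        monomial_mul, one_mul, Phi_add]

def NF (m : Fin 6 →₀ ℕ) : Prop := (m 1 = 0 ∨ m 3 = 0) ∧ (m 2 = 0 ∨ m 3 + m 4 ≤ 1)

lemma Phi_injOn_NF {m n : Fin 6 →₀ ℕ} (hm : NF m) (hn : NF n)
    (h : Phi m = Phi n) : m = n := by
  obtain ⟨a0, a1, a2, a3⟩ := Phi_apply m
  obtain ⟨b0, b1, b2, b3⟩ := Phi_apply n
  have e0 : m 0 + m 3 = n 0 + n 3 := by rw [← a0, ← b0, h]
  have e1 : m 1 + m 4 = n 1 + n 4 := by rw [← a1, ← b1, h]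
  have e2 : m 2 + m 5 = n 2 + n 5 := by rw [← a2, ← b2, h]
  have e3 : m 3 + m 4 + 2 * m 5 = n 3 + n 4 + 2 * n 5 := by rw [← a3, ← b3, h]
  obtain ⟨c1, c2⟩ := hm
  obtain ⟨d1, d2⟩ := hn
  ext i
  fin_cases i <;> simp <;> omega


def NFset (k : Type*) [Field k] : Set (MvPolynomial (Fin 6) k) :=
  {p | ∃ m, NF m ∧ p = monomial m 1}

lemma support_NF {r : MvPolynomial (Fin 6) k}
    (hr : r ∈ Submodule.span k (NFset k)) : ∀ m ∈ r.support, NF m := by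
  classical
  refine Submodule.span_induction ?_ ?_ ?_ ?_ hr
  · rintro p ⟨m, hm, rfl⟩ m' hm'
    rw [support_monomial] at hm'
    simp at hm'
    rwa [hm']
  · simp
  · intro p q _ _ hp hq m hm
    rcases Finset.mem_union.1 (support_add hm) with h | h
    exacts [hp m h, hq m h]
  · intro c p _ hp m hm
    exact hp m (support_smul hm)

lemma NF_span_inj {r : MvPolynomial (Fin 6) k}
    (hr : r ∈ Submodule.span k (NFset k)) (h0 : psi0 k r = 0) : r = 0 := by
  classical
  have hsupp := support_NF hr
  rw [MvPolynomial.eq_zero_iff]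
  intro d
  by_cases hd : d ∈ r.support
  · have hpsi : psi0 k r = ∑ m ∈ r.support, monomial (Phi m) (coeff m r) := by
      conv_lhs => rw [r.as_sum]
      rw [map_sum]
      exact Finset.sum_congr rfl fun m _ => psi0_monomial m _
    have : coeff (Phi d) (psi0 k r) = coeff d r := by
      rw [hpsi, coeff_sum]
      rw [Finset.sum_eq_single_of_mem d hd]
      · rw [coeff_monomial, if_pos rfl]
      · intro m hm hne
        rw [coeff_monomial, if_neg]
        intro hPhi
        exact hne (Phi_injOn_NF (hsupp m hm) (hsupp d hd) hPhi)
    rw [← this, h0, coeff_zero]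
  · exact notMem_support_iff.1 hd


def I0 (k : Type*) [Field k] : Ideal (MvPolynomial (Fin 6) k) :=
  Ideal.span {X 1 * X 3 - X 0 * X 4, X 2 * X 3 ^ 2 - X 0 ^ 2 * X 5,
    X 2 * X 3 * X 4 - X 0 * X 1 * X 5, X 2 * X 4 ^ 2 - X 1 ^ 2 * X 5}

def W (k : Type*) [Field k] : Submodule k (MvPolynomial (Fin 6) k) :=
  (I0 k).restrictScalars k ⊔ Submodule.span k (NFset k)

def wt (m : Fin 6 →₀ ℕ) : ℕ := m 1 + 4 * m 3 + 2 * m 4 + m 5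

lemma wt_add (a b : Fin 6 →₀ ℕ) : wt (a + b) = wt a + wt b := by
  simp [wt]; ring

lemma step_W {u v : Fin 6 →₀ ℕ} (m' : Fin 6 →₀ ℕ)
    (hgen : (monomial u 1 - monomial v 1 : MvPolynomial (Fin 6) k) ∈ I0 k)
    (hv : (monomial (v + m') 1 : MvPolynomial (Fin 6) k) ∈ W k) :
    (monomial (u + m') 1 : MvPolynomial (Fin 6) k) ∈ W k := by
  have h : (monomial (u + m') 1 : MvPolynomial (Fin 6) k)
      = (monomial u 1 - monomial v 1) * monomial m' 1 + monomial (v + m') 1 := by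
    rw [sub_mul, monomial_mul, monomial_mul, mul_one]; ring
  rw [h]
  refine Submodule.add_mem _ (Submodule.mem_sup_left ?_) hv
  show _ ∈ (I0 k).restrictScalars k
  rw [Submodule.restrictScalars_mem]
  exact Ideal.mul_mem_right _ _ hgen

lemma gen1_eq : (X 1 * X 3 - X 0 * X 4 : MvPolynomial (Fin 6) k)
    = monomial (Finsupp.single 1 1 + Finsupp.single 3 1) 1
      - monomial (Finsupp.single 0 1 + Finsupp.single 4 1) 1 := by
  rw [monomial_add_single, monomial_add_single, pow_one, pow_one,
    ← X_pow_eq_monomial, ← X_pow_eq_monomial, pow_one, pow_one]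

lemma gen2_eq : (X 2 * X 3 ^ 2 - X 0 ^ 2 * X 5 : MvPolynomial (Fin 6) k)
    = monomial (Finsupp.single 2 1 + Finsupp.single 3 2) 1
      - monomial (Finsupp.single 0 2 + Finsupp.single 5 1) 1 := by
  rw [monomial_add_single, monomial_add_single, pow_one,
    ← X_pow_eq_monomial, ← X_pow_eq_monomial, pow_one]

lemma gen3_eq : (X 2 * X 3 * X 4 - X 0 * X 1 * X 5 : MvPolynomial (Fin 6) k)
    = monomial (Finsupp.single 2 1 + Finsupp.single 3 1 + Finsupp.single 4 1) 1
      - monomial (Finsupp.single 0 1 + Finsupp.single 1 1 + Finsupp.single 5 1) 1 := by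
  rw [monomial_add_single, monomial_add_single, monomial_add_single,
    monomial_add_single, pow_one, pow_one, pow_one, pow_one,
    ← X_pow_eq_monomial, ← X_pow_eq_monomial, pow_one, pow_one]

lemma gen4_eq : (X 2 * X 4 ^ 2 - X 1 ^ 2 * X 5 : MvPolynomial (Fin 6) k)
    = monomial (Finsupp.single 2 1 + Finsupp.single 4 2) 1
      - monomial (Finsupp.single 1 2 + Finsupp.single 5 1) 1 := by
  rw [monomial_add_single, monomial_add_single, pow_one,
    ← X_pow_eq_monomial, ← X_pow_eq_monomial, pow_one]

lemma gen1_mem : (monomial (Finsupp.single 1 1 + Finsupp.single 3 1) 1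
      - monomial (Finsupp.single 0 1 + Finsupp.single 4 1) 1 :
      MvPolynomial (Fin 6) k) ∈ I0 k := by
  rw [← gen1_eq]; exact Ideal.subset_span (by simp)

lemma gen2_mem : (monomial (Finsupp.single 2 1 + Finsupp.single 3 2) 1
      - monomial (Finsupp.single 0 2 + Finsupp.single 5 1) 1 :
      MvPolynomial (Fin 6) k) ∈ I0 k := by
  rw [← gen2_eq]; exact Ideal.subset_span (by simp)

lemma gen3_mem : (monomial (Finsupp.single 2 1 + Finsupp.single 3 1 + Finsupp.single 4 1) 1
      - monomial (Finsupp.single 0 1 + Finsupp.single 1 1 + Finsupp.single 5 1) 1 :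
      MvPolynomial (Fin 6) k) ∈ I0 k := by
  rw [← gen3_eq]; exact Ideal.subset_span (by simp)

lemma gen4_mem : (monomial (Finsupp.single 2 1 + Finsupp.single 4 2) 1
      - monomial (Finsupp.single 1 2 + Finsupp.single 5 1) 1 :
      MvPolynomial (Fin 6) k) ∈ I0 k := by
  rw [← gen4_eq]; exact Ideal.subset_span (by simp)

lemma mono_mem_W (m : Fin 6 →₀ ℕ) :
    (monomial m 1 : MvPolynomial (Fin 6) k) ∈ W k := by
  suffices H : ∀ n (m : Fin 6 →₀ ℕ), wt m ≤ n →
      (monomial m 1 : MvPolynomial (Fin 6) k) ∈ W k from H (wt m) m le_rfl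
  intro n
  induction n using Nat.strong_induction_on with
  | _ n ih =>
    intro m hm
    by_cases hNF : NF m
    · exact Submodule.mem_sup_right (Submodule.subset_span ⟨m, hNF, rfl⟩)
    · have hcases : (1 ≤ m 1 ∧ 1 ≤ m 3) ∨ (1 ≤ m 2 ∧ 2 ≤ m 3)
          ∨ (1 ≤ m 2 ∧ 1 ≤ m 3 ∧ 1 ≤ m 4) ∨ (1 ≤ m 2 ∧ 2 ≤ m 4) := by
        unfold NF at hNF; omega
      rcases hcases with ⟨h1, h3⟩ | ⟨h2, h3⟩ | ⟨h2, h3, h4⟩ | ⟨h2, h4⟩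
      · have hdec : m = (Finsupp.single 1 1 + Finsupp.single 3 1) + (m - (Finsupp.single 1 1 + Finsupp.single 3 1)) := by
          ext i; fin_cases i <;>
            simp [Finsupp.single_apply] <;> omega
        have hwtu : wt (Finsupp.single 1 1 + Finsupp.single 3 1) = 5 := by simp [wt, Finsupp.single_apply]
        have hwtv : wt (Finsupp.single 0 1 + Finsupp.single 4 1) = 2 := by simp [wt, Finsupp.single_apply]
        have e1 := wt_add (Finsupp.single 1 1 + Finsupp.single 3 1) (m - (Finsupp.single 1 1 + Finsupp.single 3 1))
        have e2 := wt_add (Finsupp.single 0 1 + Finsupp.single 4 1) (m - (Finsupp.single 1 1 + Finsupp.single 3 1))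
        rw [← hdec] at e1
        rw [hdec]
        exact step_W _ gen1_mem (ih (n - 1) (by omega) _ (by omega))
      · have hdec : m = (Finsupp.single 2 1 + Finsupp.single 3 2) + (m - (Finsupp.single 2 1 + Finsupp.single 3 2)) := by
          ext i; fin_cases i <;>
            simp [Finsupp.single_apply] <;> omega
        have hwtu : wt (Finsupp.single 2 1 + Finsupp.single 3 2) = 8 := by simp [wt, Finsupp.single_apply]
        have hwtv : wt (Finsupp.single 0 2 + Finsupp.single 5 1) = 1 := by simp [wt, Finsupp.single_apply]
        have e1 := wt_add (Finsupp.single 2 1 + Finsupp.single 3 2) (m - (Finsupp.single 2 1 + Finsupp.single 3 2))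
        have e2 := wt_add (Finsupp.single 0 2 + Finsupp.single 5 1) (m - (Finsupp.single 2 1 + Finsupp.single 3 2))
        rw [← hdec] at e1
        rw [hdec]
        exact step_W _ gen2_mem (ih (n - 1) (by omega) _ (by omega))
      · have hdec : m = (Finsupp.single 2 1 + Finsupp.single 3 1 + Finsupp.single 4 1) + (m - (Finsupp.single 2 1 + Finsupp.single 3 1 + Finsupp.single 4 1)) := by
          ext i; fin_cases i <;>
            simp [Finsupp.single_apply] <;> omega
        have hwtu : wt (Finsupp.single 2 1 + Finsupp.single 3 1 + Finsupp.single 4 1) = 6 := by simp [wt, Finsupp.single_apply]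
        have hwtv : wt (Finsupp.single 0 1 + Finsupp.single 1 1 + Finsupp.single 5 1) = 2 := by simp [wt, Finsupp.single_apply]
        have e1 := wt_add (Finsupp.single 2 1 + Finsupp.single 3 1 + Finsupp.single 4 1) (m - (Finsupp.single 2 1 + Finsupp.single 3 1 + Finsupp.single 4 1))
        have e2 := wt_add (Finsupp.single 0 1 + Finsupp.single 1 1 + Finsupp.single 5 1) (m - (Finsupp.single 2 1 + Finsupp.single 3 1 + Finsupp.single 4 1))
        rw [← hdec] at e1
        rw [hdec]
        exact step_W _ gen3_mem (ih (n - 1) (by omega) _ (by omega))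
      · have hdec : m = (Finsupp.single 2 1 + Finsupp.single 4 2) + (m - (Finsupp.single 2 1 + Finsupp.single 4 2)) := by
          ext i; fin_cases i <;>
            simp [Finsupp.single_apply] <;> omega
        have hwtu : wt (Finsupp.single 2 1 + Finsupp.single 4 2) = 4 := by simp [wt, Finsupp.single_apply]
        have hwtv : wt (Finsupp.single 1 2 + Finsupp.single 5 1) = 3 := by simp [wt, Finsupp.single_apply]
        have e1 := wt_add (Finsupp.single 2 1 + Finsupp.single 4 2) (m - (Finsupp.single 2 1 + Finsupp.single 4 2))
        have e2 := wt_add (Finsupp.single 1 2 + Finsupp.single 5 1) (m - (Finsupp.single 2 1 + Finsupp.single 4 2))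
        rw [← hdec] at e1
        rw [hdec]
        exact step_W _ gen4_mem (ih (n - 1) (by omega) _ (by omega))


lemma psi0_X0 : psi0 k (X 0) = X 0 := by simp only [psi0, aeval_X]; rfl
lemma psi0_X1 : psi0 k (X 1) = X 1 := by simp only [psi0, aeval_X]; rfl
lemma psi0_X2 : psi0 k (X 2) = X 2 := by simp only [psi0, aeval_X]; rfl
lemma psi0_X3 : psi0 k (X 3) = X 3 * X 0 := by simp only [psi0, aeval_X]; rfl
lemma psi0_X4 : psi0 k (X 4) = X 3 * X 1 := by simp only [psi0, aeval_X]; rfl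
lemma psi0_X5 : psi0 k (X 5) = X 3 ^ 2 * X 2 := by simp only [psi0, aeval_X]; rfl

lemma f_mem_W (f : MvPolynomial (Fin 6) k) : f ∈ W k := by
  classical
  rw [f.as_sum]
  refine Submodule.sum_mem _ fun m _ => ?_
  have : (monomial m (coeff m f) : MvPolynomial (Fin 6) k)
      = coeff m f • monomial m 1 := by
    rw [smul_monomial, smul_eq_mul, mul_one]
  rw [this]
  exact Submodule.smul_mem _ _ (mono_mem_W m)

lemma psi0_I0 {h : MvPolynomial (Fin 6) k} (hh : h ∈ I0 k) : psi0 k h = 0 := by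
  refine Submodule.span_induction ?_ ?_ ?_ ?_ hh
  · intro x hx
    simp only [Set.mem_insert_iff, Set.mem_singleton_iff] at hx
    rcases hx with rfl | rfl | rfl | rfl <;>
      · simp only [map_sub, map_mul, map_pow, psi0_X0, psi0_X1, psi0_X2,
          psi0_X3, psi0_X4, psi0_X5]
        ring
  · simp
  · intro p q _ _ hp hq; rw [map_add, hp, hq, add_zero]
  · intro c p _ hp; rw [smul_eq_mul, map_mul, hp, mul_zero]

lemma ker_sub_I0 {f : MvPolynomial (Fin 6) k} (hf : psi0 k f = 0) : f ∈ I0 k := by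
  obtain ⟨q, hq, r, hr, hqr⟩ := Submodule.mem_sup.1 (f_mem_W f)
  rw [Submodule.restrictScalars_mem] at hq
  have hq0 : psi0 k q = 0 := psi0_I0 hq
  have hr0 : psi0 k r = 0 := by
    have := congrArg (psi0 k) hqr
    rw [map_add, hq0, zero_add] at this
    rw [this, hf]
  have : r = 0 := NF_span_inj hr hr0
  rw [← hqr, this, add_zero]
  exact hq

def Gens5 (k : Type*) [Field k] : Set (MvPolynomial (Fin 6) k × MvPolynomial (Fin 6) k) :=
  {(X 1 * X 3 - X 0 * X 4, 0), (X 2 * X 3, -X 0), (X 2 * X 4, -X 1),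
    (X 0 * X 5, -X 3), (X 1 * X 5, -X 4)}

def N5 (k : Type*) [Field k] :
    Submodule (MvPolynomial (Fin 6) k) (MvPolynomial (Fin 6) k × MvPolynomial (Fin 6) k) :=
  Submodule.span _ (Gens5 k)

lemma mem_N5_of_combo {x : MvPolynomial (Fin 6) k × MvPolynomial (Fin 6) k}
    (hx : x ∈ Gens5 k) : x ∈ N5 k := Submodule.subset_span hx

lemma G1_mem : ((X 1 * X 3 - X 0 * X 4, 0) : MvPolynomial (Fin 6) k × MvPolynomial (Fin 6) k) ∈ N5 k :=
  mem_N5_of_combo (by simp [Gens5])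
lemma G2_mem : ((X 2 * X 3, -X 0) : MvPolynomial (Fin 6) k × MvPolynomial (Fin 6) k) ∈ N5 k :=
  mem_N5_of_combo (by simp [Gens5])
lemma G3_mem : ((X 2 * X 4, -X 1) : MvPolynomial (Fin 6) k × MvPolynomial (Fin 6) k) ∈ N5 k :=
  mem_N5_of_combo (by simp [Gens5])
lemma G4_mem : ((X 0 * X 5, -X 3) : MvPolynomial (Fin 6) k × MvPolynomial (Fin 6) k) ∈ N5 k :=
  mem_N5_of_combo (by simp [Gens5])
lemma G5_mem : ((X 1 * X 5, -X 4) : MvPolynomial (Fin 6) k × MvPolynomial (Fin 6) k) ∈ N5 k :=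
  mem_N5_of_combo (by simp [Gens5])

lemma pair_I0 {h : MvPolynomial (Fin 6) k} (hh : h ∈ I0 k) :
    ((h, 0) : MvPolynomial (Fin 6) k × MvPolynomial (Fin 6) k) ∈ N5 k ∧
      ((0, h) : MvPolynomial (Fin 6) k × MvPolynomial (Fin 6) k) ∈ N5 k := by
  refine Submodule.span_induction ?_ ?_ ?_ ?_ hh
  · intro x hx
    simp only [Set.mem_insert_iff, Set.mem_singleton_iff] at hx
    rcases hx with rfl | rfl | rfl | rfl
    · constructor
      · exact G1_mem
      · have e : ((0 : MvPolynomial (Fin 6) k), X 1 * X 3 - X 0 * X 4)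
            = (X 4 : MvPolynomial (Fin 6) k) • ((X 2 * X 3, -X 0) : MvPolynomial (Fin 6) k × MvPolynomial (Fin 6) k)
              - (X 3 : MvPolynomial (Fin 6) k) • (X 2 * X 4, -X 1) := by
          simp only [Prod.smul_mk, smul_eq_mul, Prod.mk_sub_mk, Prod.mk.injEq]
          constructor <;> ring
        rw [e]
        exact sub_mem (Submodule.smul_mem _ _ G2_mem) (Submodule.smul_mem _ _ G3_mem)
    · constructor
      · have e : ((X 2 * X 3 ^ 2 - X 0 ^ 2 * X 5 : MvPolynomial (Fin 6) k), (0 : MvPolynomial (Fin 6) k))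
            = (X 3 : MvPolynomial (Fin 6) k) • ((X 2 * X 3, -X 0) : MvPolynomial (Fin 6) k × MvPolynomial (Fin 6) k)
              - (X 0 : MvPolynomial (Fin 6) k) • (X 0 * X 5, -X 3) := by
          simp only [Prod.smul_mk, smul_eq_mul, Prod.mk_sub_mk, Prod.mk.injEq]
          constructor <;> ring
        rw [e]
        exact sub_mem (Submodule.smul_mem _ _ G2_mem) (Submodule.smul_mem _ _ G4_mem)
      · have e : ((0 : MvPolynomial (Fin 6) k), (X 2 * X 3 ^ 2 - X 0 ^ 2 * X 5 : MvPolynomial (Fin 6) k))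
            = (X 0 * X 5 : MvPolynomial (Fin 6) k) • ((X 2 * X 3, -X 0) : MvPolynomial (Fin 6) k × MvPolynomial (Fin 6) k)
              - (X 2 * X 3 : MvPolynomial (Fin 6) k) • (X 0 * X 5, -X 3) := by
          simp only [Prod.smul_mk, smul_eq_mul, Prod.mk_sub_mk, Prod.mk.injEq]
          constructor <;> ring
        rw [e]
        exact sub_mem (Submodule.smul_mem _ _ G2_mem) (Submodule.smul_mem _ _ G4_mem)
    · constructor
      · have e : ((X 2 * X 3 * X 4 - X 0 * X 1 * X 5 : MvPolynomial (Fin 6) k), (0 : MvPolynomial (Fin 6) k))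
            = (X 3 : MvPolynomial (Fin 6) k) • ((X 2 * X 4, -X 1) : MvPolynomial (Fin 6) k × MvPolynomial (Fin 6) k)
              - (X 1 : MvPolynomial (Fin 6) k) • (X 0 * X 5, -X 3) := by
          simp only [Prod.smul_mk, smul_eq_mul, Prod.mk_sub_mk, Prod.mk.injEq]
          constructor <;> ring
        rw [e]
        exact sub_mem (Submodule.smul_mem _ _ G3_mem) (Submodule.smul_mem _ _ G4_mem)
      · have e : ((0 : MvPolynomial (Fin 6) k), (X 2 * X 3 * X 4 - X 0 * X 1 * X 5 : MvPolynomial (Fin 6) k))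
            = (X 0 * X 5 : MvPolynomial (Fin 6) k) • ((X 2 * X 4, -X 1) : MvPolynomial (Fin 6) k × MvPolynomial (Fin 6) k)
              - (X 2 * X 3 : MvPolynomial (Fin 6) k) • (X 1 * X 5, -X 4)
              + (X 2 * X 5 : MvPolynomial (Fin 6) k) • (X 1 * X 3 - X 0 * X 4, 0) := by
          simp only [Prod.smul_mk, smul_eq_mul, Prod.mk_sub_mk, Prod.mk_add_mk, Prod.mk.injEq]
          constructor <;> ring
        rw [e]
        exact add_mem (sub_mem (Submodule.smul_mem _ _ G3_mem) (Submodule.smul_mem _ _ G5_mem))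
          (Submodule.smul_mem _ _ G1_mem)
    · constructor
      · have e : ((X 2 * X 4 ^ 2 - X 1 ^ 2 * X 5 : MvPolynomial (Fin 6) k), (0 : MvPolynomial (Fin 6) k))
            = (X 4 : MvPolynomial (Fin 6) k) • ((X 2 * X 4, -X 1) : MvPolynomial (Fin 6) k × MvPolynomial (Fin 6) k)
              - (X 1 : MvPolynomial (Fin 6) k) • (X 1 * X 5, -X 4) := by
          simp only [Prod.smul_mk, smul_eq_mul, Prod.mk_sub_mk, Prod.mk.injEq]
          constructor <;> ring
        rw [e]
        exact sub_mem (Submodule.smul_mem _ _ G3_mem) (Submodule.smul_mem _ _ G5_mem)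
      · have e : ((0 : MvPolynomial (Fin 6) k), (X 2 * X 4 ^ 2 - X 1 ^ 2 * X 5 : MvPolynomial (Fin 6) k))
            = (X 1 * X 5 : MvPolynomial (Fin 6) k) • ((X 2 * X 4, -X 1) : MvPolynomial (Fin 6) k × MvPolynomial (Fin 6) k)
              - (X 2 * X 4 : MvPolynomial (Fin 6) k) • (X 1 * X 5, -X 4) := by
          simp only [Prod.smul_mk, smul_eq_mul, Prod.mk_sub_mk, Prod.mk.injEq]
          constructor <;> ring
        rw [e]
        exact sub_mem (Submodule.smul_mem _ _ G3_mem) (Submodule.smul_mem _ _ G5_mem)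
  · exact ⟨zero_mem _, zero_mem _⟩
  · rintro p q _ _ ⟨hp1, hp2⟩ ⟨hq1, hq2⟩
    constructor
    · have e : ((p + q, 0) : MvPolynomial (Fin 6) k × MvPolynomial (Fin 6) k)
          = (p, 0) + (q, 0) := by simp
      rw [e]; exact add_mem hp1 hq1
    · have e : ((0, p + q) : MvPolynomial (Fin 6) k × MvPolynomial (Fin 6) k)
          = (0, p) + (0, q) := by simp
      rw [e]; exact add_mem hp2 hq2
  · rintro c p _ ⟨hp1, hp2⟩
    constructor
    · have e : ((c • p, 0) : MvPolynomial (Fin 6) k × MvPolynomial (Fin 6) k)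
          = c • ((p, 0) : MvPolynomial (Fin 6) k × MvPolynomial (Fin 6) k) := by
        simp [Prod.smul_mk]
      rw [e]; exact Submodule.smul_mem _ _ hp1
    · have e : ((0, c • p) : MvPolynomial (Fin 6) k × MvPolynomial (Fin 6) k)
          = c • ((0, p) : MvPolynomial (Fin 6) k × MvPolynomial (Fin 6) k) := by
        simp [Prod.smul_mk]
      rw [e]; exact Submodule.smul_mem _ _ hp2

lemma N5_ker {p : MvPolynomial (Fin 6) k × MvPolynomial (Fin 6) k} (hp : p ∈ N5 k) :
    psi0 k p.1 + psi0 k p.2 * (X 3 * X 2) = 0 := by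
  refine Submodule.span_induction ?_ ?_ ?_ ?_ hp
  · intro x hx
    simp only [Gens5, Set.mem_insert_iff, Set.mem_singleton_iff] at hx
    rcases hx with rfl | rfl | rfl | rfl | rfl <;>
      · simp only [map_sub, map_mul, map_neg, map_zero, psi0_X0, psi0_X1, psi0_X2,
          psi0_X3, psi0_X4, psi0_X5]
        ring
  · simp
  · intro x y _ _ hx hy
    simp only [Prod.fst_add, Prod.snd_add, map_add]
    linear_combination hx + hy
  · intro c x _ hx
    simp only [Prod.smul_fst, Prod.smul_snd, smul_eq_mul, map_mul]
    linear_combination psi0 k c * hx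

def theta0 (k : Type*) [Field k] : MvPolynomial (Fin 6) k →ₐ[k] MvPolynomial (Fin 6) k :=
  aeval ![0, 0, X 2, 0, 0, X 5]

def rho0 (k : Type*) [Field k] : MvPolynomial (Fin 4) k →ₐ[k] MvPolynomial (Fin 4) k :=
  aeval ![0, 0, X 2, X 3]

lemma theta0_X0 : theta0 k (X 0) = 0 := by simp only [theta0, aeval_X]; rfl
lemma theta0_X1 : theta0 k (X 1) = 0 := by simp only [theta0, aeval_X]; rfl
lemma theta0_X2 : theta0 k (X 2) = X 2 := by simp only [theta0, aeval_X]; rfl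
lemma theta0_X3 : theta0 k (X 3) = 0 := by simp only [theta0, aeval_X]; rfl
lemma theta0_X4 : theta0 k (X 4) = 0 := by simp only [theta0, aeval_X]; rfl
lemma theta0_X5 : theta0 k (X 5) = X 5 := by simp only [theta0, aeval_X]; rfl

lemma theta_decomp (g : MvPolynomial (Fin 6) k) :
    ∃ a b c d, g = X 0 * a + X 1 * b + X 3 * c + X 4 * d + theta0 k g := by
  induction g using MvPolynomial.induction_on with
  | C c =>
      refine ⟨0, 0, 0, 0, ?_⟩
      have : theta0 k (C c) = C c := by
        simp [theta0, aeval_C, algebraMap_eq]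
      rw [this]; ring
  | add p q hp hq =>
      obtain ⟨a, b, c, d, hp⟩ := hp
      obtain ⟨a', b', c', d', hq⟩ := hq
      refine ⟨a + a', b + b', c + c', d + d', ?_⟩
      rw [map_add]
      linear_combination hp + hq
  | mul_X p i hp =>
      obtain ⟨a, b, c, d, hp⟩ := hp
      fin_cases i
      · show ∃ a b c d, p * X 0 = X 0 * a + X 1 * b + X 3 * c + X 4 * d + theta0 k (p * X 0)
        exact ⟨p, 0, 0, 0, by rw [map_mul, theta0_X0, mul_zero]; ring⟩
      · show ∃ a b c d, p * X 1 = X 0 * a + X 1 * b + X 3 * c + X 4 * d + theta0 k (p * X 1)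
        exact ⟨0, p, 0, 0, by rw [map_mul, theta0_X1, mul_zero]; ring⟩
      · show ∃ a b c d, p * X 2 = X 0 * a + X 1 * b + X 3 * c + X 4 * d + theta0 k (p * X 2)
        refine ⟨a * X 2, b * X 2, c * X 2, d * X 2, ?_⟩
        rw [map_mul, theta0_X2]
        linear_combination X 2 * hp
      · show ∃ a b c d, p * X 3 = X 0 * a + X 1 * b + X 3 * c + X 4 * d + theta0 k (p * X 3)
        exact ⟨0, 0, p, 0, by rw [map_mul, theta0_X3, mul_zero]; ring⟩
      · show ∃ a b c d, p * X 4 = X 0 * a + X 1 * b + X 3 * c + X 4 * d + theta0 k (p * X 4)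
        exact ⟨0, 0, 0, p, by rw [map_mul, theta0_X4, mul_zero]; ring⟩
      · show ∃ a b c d, p * X 5 = X 0 * a + X 1 * b + X 3 * c + X 4 * d + theta0 k (p * X 5)
        refine ⟨a * X 5, b * X 5, c * X 5, d * X 5, ?_⟩
        rw [map_mul, theta0_X5]
        linear_combination X 5 * hp

lemma even_supp (p : MvPolynomial (Fin 6) k) :
    ∀ m ∈ (psi0 k (theta0 k p)).support, Even (m 3) := by
  classical
  induction p using MvPolynomial.induction_on with
  | C c =>
      intro m hm
      have hC : psi0 k (theta0 k (C c)) = C c := by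
        have h1 : theta0 k (C c) = C c := by simp [theta0, aeval_C, algebraMap_eq]
        rw [h1]; simp [psi0, aeval_C, algebraMap_eq]
      rw [hC, mem_support_iff, coeff_C] at hm
      rcases eq_or_ne (0 : Fin 4 →₀ ℕ) m with h | h
      · rw [← h]; simp
      · rw [if_neg h] at hm; exact absurd rfl hm
  | add p q hp hq =>
      intro m hm
      rw [map_add, map_add] at hm
      rcases Finset.mem_union.1 (support_add hm) with h | h
      exacts [hp m h, hq m h]
  | mul_X p i hp =>
      intro m hm
      rw [map_mul, map_mul] at hm
      fin_cases i
      · replace hm : m ∈ (psi0 k (theta0 k p) * psi0 k (theta0 k (X 0))).support := hm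
        rw [theta0_X0, map_zero, mul_zero] at hm; simp at hm
      · replace hm : m ∈ (psi0 k (theta0 k p) * psi0 k (theta0 k (X 1))).support := hm
        rw [theta0_X1, map_zero, mul_zero] at hm; simp at hm
      · replace hm : m ∈ (psi0 k (theta0 k p) * psi0 k (theta0 k (X 2))).support := hm
        rw [theta0_X2, psi0_X2, support_mul_X] at hm
        obtain ⟨a, ha, rfl⟩ := Finset.mem_map.1 hm
        have := hp a ha
        rw [addRightEmbedding_apply]
        simpa [Finsupp.single_apply] using this
      · replace hm : m ∈ (psi0 k (theta0 k p) * psi0 k (theta0 k (X 3))).support := hm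
        rw [theta0_X3, map_zero, mul_zero] at hm; simp at hm
      · replace hm : m ∈ (psi0 k (theta0 k p) * psi0 k (theta0 k (X 4))).support := hm
        rw [theta0_X4, map_zero, mul_zero] at hm; simp at hm
      · replace hm : m ∈ (psi0 k (theta0 k p) * psi0 k (theta0 k (X 5))).support := hm
        rw [theta0_X5, psi0_X5,
          show psi0 k (theta0 k p) * (X 3 ^ 2 * X 2)
            = psi0 k (theta0 k p) * X 3 * X 3 * X 2 by ring,
          support_mul_X, support_mul_X, support_mul_X] at hm
        obtain ⟨a2, ha2, rfl⟩ := Finset.mem_map.1 hm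
        obtain ⟨a1, ha1, rfl⟩ := Finset.mem_map.1 ha2
        obtain ⟨a, ha, rfl⟩ := Finset.mem_map.1 ha1
        have := hp a ha
        simp only [addRightEmbedding_apply, Finsupp.add_apply, Finsupp.single_apply]
        obtain ⟨t, ht⟩ := this
        refine ⟨t + 1, ?_⟩
        simp [ht]
        omega

lemma rho0_X0 : rho0 k (X 0) = 0 := by simp only [rho0, aeval_X]; rfl
lemma rho0_X1 : rho0 k (X 1) = 0 := by simp only [rho0, aeval_X]; rfl
lemma rho0_X2 : rho0 k (X 2) = X 2 := by simp only [rho0, aeval_X]; rfl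
lemma rho0_X3 : rho0 k (X 3) = X 3 := by simp only [rho0, aeval_X]; rfl

lemma rho_psi (f : MvPolynomial (Fin 6) k) :
    rho0 k (psi0 k f) = psi0 k (theta0 k f) := by
  have h : (rho0 k).comp (psi0 k) = (psi0 k).comp (theta0 k) := by
    apply MvPolynomial.algHom_ext
    intro i
    fin_cases i
    · show rho0 k (psi0 k (X 0)) = psi0 k (theta0 k (X 0))
      rw [psi0_X0, theta0_X0, rho0_X0, map_zero]
    · show rho0 k (psi0 k (X 1)) = psi0 k (theta0 k (X 1))
      rw [psi0_X1, theta0_X1, rho0_X1, map_zero]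
    · show rho0 k (psi0 k (X 2)) = psi0 k (theta0 k (X 2))
      rw [psi0_X2, theta0_X2, psi0_X2, rho0_X2]
    · show rho0 k (psi0 k (X 3)) = psi0 k (theta0 k (X 3))
      rw [psi0_X3, theta0_X3, map_mul, rho0_X3, rho0_X0, mul_zero, map_zero]
    · show rho0 k (psi0 k (X 4)) = psi0 k (theta0 k (X 4))
      rw [psi0_X4, theta0_X4, map_mul, rho0_X3, rho0_X1, mul_zero, map_zero]
    · show rho0 k (psi0 k (X 5)) = psi0 k (theta0 k (X 5))
      rw [psi0_X5, theta0_X5, psi0_X5, map_mul, map_pow, rho0_X3, rho0_X2]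
  exact DFunLike.congr_fun h f

lemma theta_idem (f : MvPolynomial (Fin 6) k) :
    theta0 k (theta0 k f) = theta0 k f := by
  have h : (theta0 k).comp (theta0 k) = theta0 k := by
    apply MvPolynomial.algHom_ext
    intro i
    fin_cases i
    · show theta0 k (theta0 k (X 0)) = theta0 k (X 0)
      rw [theta0_X0]; exact map_zero _
    · show theta0 k (theta0 k (X 1)) = theta0 k (X 1)
      rw [theta0_X1]; exact map_zero _
    · show theta0 k (theta0 k (X 2)) = theta0 k (X 2)
      rw [theta0_X2, theta0_X2]
    · show theta0 k (theta0 k (X 3)) = theta0 k (X 3)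
      rw [theta0_X3]; exact map_zero _
    · show theta0 k (theta0 k (X 4)) = theta0 k (X 4)
      rw [theta0_X4]; exact map_zero _
    · show theta0 k (theta0 k (X 5)) = theta0 k (X 5)
      rw [theta0_X5, theta0_X5]
  exact DFunLike.congr_fun h f

end Aux

/-- Let `k` be a field, `T = k[x₀,x₁,x₂,y₀,y₁,y₂]` (variables indexed by
`Fin 6`: `X 0 = x₀`, `X 1 = x₁`, `X 2 = x₂`, `X 3 = y₀`, `X 4 = y₁`, `X 5 = y₂`) and
`ψ : T → k[x₀,x₁,x₂,t]` (variables indexed by `Fin 4`: `X 0 = x₀`, `X 1 = x₁`, `X 2 = x₂`,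
`X 3 = t`) the `k`-algebra map with `ψ(xᵢ) = xᵢ`, `ψ(y₀) = t·x₀`, `ψ(y₁) = t·x₁`,
`ψ(y₂) = t²·x₂`.  The kernel of the `T`-module map `π : T² → k[x₀,x₁,x₂,t]`,
`π(f,g) = ψ(f)·1 + ψ(g)·(t·x₂)`, consists exactly of the `T`-linear combinations of the
five elements `(x₁y₀ − x₀y₁, 0)`, `(x₂y₀, −x₀)`, `(x₂y₁, −x₁)`, `(x₀y₂, −y₀)`,
`(x₁y₂, −y₁)`. -/
theorem kernel_presentation_normalization_P112
    (k : Type*) [Field k]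
    (ψ : MvPolynomial (Fin 6) k →ₐ[k] MvPolynomial (Fin 4) k)
    (hψ : ψ = MvPolynomial.aeval
      ![X 0, X 1, X 2, X 3 * X 0, X 3 * X 1, X 3 ^ 2 * X 2]) :
    ∀ p : MvPolynomial (Fin 6) k × MvPolynomial (Fin 6) k,
      ψ p.1 + ψ p.2 * (X 3 * X 2) = 0 ↔
        p ∈ Submodule.span (MvPolynomial (Fin 6) k)
          ({(X 1 * X 3 - X 0 * X 4, 0),
            (X 2 * X 3, -X 0),
            (X 2 * X 4, -X 1),
            (X 0 * X 5, -X 3),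
            (X 1 * X 5, -X 4)} :
            Set (MvPolynomial (Fin 6) k × MvPolynomial (Fin 6) k)) := by
  intro p
  have hps : ψ = psi0 k := hψ
  subst hps
  show psi0 k p.1 + psi0 k p.2 * (X 3 * X 2) = 0 ↔ p ∈ N5 k
  obtain ⟨f, g⟩ := p
  constructor
  · intro H
    obtain ⟨a, b, c, d, hg⟩ := theta_decomp g
    have hG : psi0 k g = X 0 * psi0 k a + X 1 * psi0 k b + X 3 * X 0 * psi0 k c
        + X 3 * X 1 * psi0 k d + psi0 k (theta0 k g) := by
      conv_lhs => rw [hg]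
      simp only [map_add, map_mul, psi0_X0, psi0_X1, psi0_X3, psi0_X4]
    set e : MvPolynomial (Fin 6) k :=
      a * (X 2 * X 3) + b * (X 2 * X 4) + c * (X 0 * X 5) + d * (X 1 * X 5) with he
    have H' : psi0 k (f + e) + psi0 k (theta0 k g) * (X 3 * X 2) = 0 := by
      rw [hG] at H
      simp only [he, map_add, map_mul, psi0_X0, psi0_X1, psi0_X2, psi0_X3, psi0_X4, psi0_X5]
      linear_combination H
    have Hr : psi0 k (theta0 k (f + e)) + psi0 k (theta0 k g) * (X 3 * X 2) = 0 := by
      have h2 := congrArg (rho0 k) H'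
      rw [map_add, map_mul, rho_psi, rho_psi, theta_idem, map_mul, rho0_X3, rho0_X2,
        map_zero] at h2
      exact h2
    have hB : psi0 k (theta0 k g) * (X 3 * X 2) = 0 := by
      rw [MvPolynomial.eq_zero_iff]
      intro mm
      by_cases hpar : Even (mm 3)
      · by_contra hc
        have hmm : mm ∈ (psi0 k (theta0 k g) * (X 3 * X 2)).support :=
          mem_support_iff.2 hc
        rw [show psi0 k (theta0 k g) * (X 3 * X 2)
            = psi0 k (theta0 k g) * X 3 * X 2 by ring,
          support_mul_X, support_mul_X] at hmm
        obtain ⟨a2, ha2, rfl⟩ := Finset.mem_map.1 hmm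
        obtain ⟨a1, ha1, rfl⟩ := Finset.mem_map.1 ha2
        obtain ⟨t, ht⟩ := even_supp g a1 ha1
        simp only [addRightEmbedding_apply, Finsupp.add_apply, Finsupp.single_apply] at hpar
        obtain ⟨u, hu⟩ := hpar
        simp [ht] at hu
        omega
      · have hcoeff := congrArg (coeff mm) Hr
        rw [coeff_add, coeff_zero] at hcoeff
        have h1 : coeff mm (psi0 k (theta0 k (f + e))) = 0 := by
          by_contra hc
          exact hpar (even_supp (f + e) mm (mem_support_iff.2 hc))
        rw [h1, zero_add] at hcoeff
        exact hcoeff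
    have hg0 : psi0 k (theta0 k g) = 0 := by
      rcases mul_eq_zero.1 hB with h | h
      · exact h
      · exact absurd h (mul_ne_zero (X_ne_zero 3) (X_ne_zero 2))
    have hf0 : psi0 k (f + e) = 0 := by
      rw [hg0, zero_mul, add_zero] at H'
      exact H'
    have h1 : f + e ∈ I0 k := ker_sub_I0 hf0
    have h2 : theta0 k g ∈ I0 k := ker_sub_I0 hg0
    have key : ((f, g) : MvPolynomial (Fin 6) k × MvPolynomial (Fin 6) k)
        = (f + e, 0) + (0, theta0 k g)
          + ((-a) • ((X 2 * X 3, -X 0) : MvPolynomial (Fin 6) k × MvPolynomial (Fin 6) k)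
            + (-b) • ((X 2 * X 4, -X 1) : MvPolynomial (Fin 6) k × MvPolynomial (Fin 6) k)
            + (-c) • ((X 0 * X 5, -X 3) : MvPolynomial (Fin 6) k × MvPolynomial (Fin 6) k)
            + (-d) • ((X 1 * X 5, -X 4) : MvPolynomial (Fin 6) k × MvPolynomial (Fin 6) k)) := by
      simp only [Prod.smul_mk, smul_eq_mul, Prod.mk_add_mk, Prod.mk.injEq]
      constructor
      · ring
      · linear_combination hg
    rw [key]
    refine add_mem (add_mem (pair_I0 h1).1 (pair_I0 h2).2) ?_
    exact add_mem (add_mem (add_mem (Submodule.smul_mem _ _ G2_mem)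
      (Submodule.smul_mem _ _ G3_mem)) (Submodule.smul_mem _ _ G4_mem))
      (Submodule.smul_mem _ _ G5_mem)
  · intro h
    exact N5_ker h
end

section
/- Let k be a field and T = k[x₀,x₁,x₂,y₀,y₁,y₂] the polynomial ring in 6 variables. Let M₁ be the 2×5 matrix over T with rows (x₁y₀ − x₀y₁, x₂y₀, x₂y₁, x₀y₂, x₁y₂) and (0, −x₀, −x₁, −y₀, −y₁), and let M₂ be the 5×3 matrix over T with rows (−x₂, 0, −y₂), (x₁, −y₁, 0), (−x₀, y₀, 0), (0, −x₁, −y₁), (0, x₀, y₀). Then: (1) M₁·M₂ = 0; (2) the kernel of the T-linear map T⁵ → T² given by M₁ equals the image of the T-linear map T³ → T⁵ given by M₂; and (3) the T-linear map T³ → T⁵ given by M₂ is injective. -/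
open MvPolynomial

namespace FRN112

variable {k : Type*} [Field k]

noncomputable def phi (i : Fin 6) : MvPolynomial (Fin 6) k →ₐ[k] MvPolynomial (Fin 6) k :=
  aeval (Function.update X i 0)

@[simp] lemma phi_X_self (i : Fin 6) : phi (k := k) i (X i) = 0 := by simp [phi]

@[simp] lemma phi_X_ne (i j : Fin 6) (h : j ≠ i) : phi (k := k) i (X j) = X j := by
  simp [phi, Function.update_of_ne h]

lemma X_dvd_sub_phi (i : Fin 6) (f : MvPolynomial (Fin 6) k) : X i ∣ f - phi i f := by
  induction f using MvPolynomial.induction_on with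
  | C a => simp [phi]
  | add p q hp hq =>
      have : p + q - phi i (p + q) = (p - phi i p) + (q - phi i q) := by
        rw [map_add]; ring
      rw [this]; exact dvd_add hp hq
  | mul_X p j hp =>
      rcases eq_or_ne j i with rfl | hne
      · rw [map_mul, phi_X_self, mul_zero, sub_zero]
        exact Dvd.intro p (mul_comm p (X j)).symm
      · rw [map_mul, phi_X_ne i j hne]
        have : p * X j - phi i p * X j = (p - phi i p) * X j := by ring
        rw [this]
        exact Dvd.dvd.mul_right hp (X j)

lemma exists_split (i : Fin 6) (f : MvPolynomial (Fin 6) k) :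
    ∃ q, f = X i * q + phi i f := by
  obtain ⟨q, hq⟩ := X_dvd_sub_phi i f
  exact ⟨q, by linear_combination hq⟩

lemma phi_phi (i : Fin 6) (f : MvPolynomial (Fin 6) k) : phi i (phi i f) = phi i f := by
  have : (phi (k := k) i).comp (phi i) = phi i := by
    apply MvPolynomial.algHom_ext
    intro j
    rcases eq_or_ne j i with rfl | hne
    · simp
    · simp [hne]
  exact DFunLike.congr_fun this f

lemma split_zero {i : Fin 6} {q r : MvPolynomial (Fin 6) k}
    (hr : phi i r = r) (h : X i * q + r = 0) : q = 0 ∧ r = 0 := by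
  have h2 := congrArg (phi i) h
  rw [map_add, map_mul, phi_X_self, zero_mul, zero_add, hr, map_zero] at h2
  subst h2
  rw [add_zero, mul_eq_zero] at h
  rcases h with h | h
  · exact absurd h (X_ne_zero i)
  · exact ⟨h, rfl⟩

lemma degreeOf_phi (i : Fin 6) (f : MvPolynomial (Fin 6) k) :
    degreeOf i (phi i f) = 0 := by
  rw [← Nat.le_zero]
  induction f using MvPolynomial.induction_on with
  | C a =>
      have h : phi (k := k) i (C a) = C a := by simp [phi]
      rw [h]
      exact le_of_eq (degreeOf_C _ _)
  | add p q hp hq =>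
      rw [map_add]
      exact le_trans (degreeOf_add_le _ _ _) (by omega)
  | mul_X p j hp =>
      rw [map_mul]
      rcases eq_or_ne j i with rfl | hne
      · simp
      · rw [phi_X_ne i j hne]
        refine le_trans (degreeOf_mul_le _ _ _) ?_
        have : degreeOf i (X j : MvPolynomial (Fin 6) k) = 0 := by
          rw [degreeOf_X]; simp [hne.symm]
        omega

lemma split_degree (i : Fin 6) (f : MvPolynomial (Fin 6) k) (n : ℕ)
    (hf : degreeOf i f ≤ n + 1) :
    ∃ q, f = X i * q + phi i f ∧ degreeOf i q ≤ n := by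
  obtain ⟨q, hq⟩ := exists_split i f
  refine ⟨q, hq, ?_⟩
  have h : X i * q = f - phi i f := by linear_combination -hq
  rw [degreeOf_le_iff]
  intro m hm
  rw [mem_support_iff] at hm
  have hc : coeff (Finsupp.single i 1 + m) (X i * q) ≠ 0 := by rwa [coeff_X_mul]
  rw [h, coeff_sub] at hc
  have hor : coeff (Finsupp.single i 1 + m) f ≠ 0 ∨
      coeff (Finsupp.single i 1 + m) (phi i f) ≠ 0 := by
    by_contra hcon
    push_neg at hcon
    rw [hcon.1, hcon.2, sub_zero] at hc
    exact hc rfl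
  rcases hor with h' | h'
  · have h1 := degreeOf_le_iff.mp hf _ (mem_support_iff.mpr h')
    rw [Finsupp.add_apply, Finsupp.single_eq_same] at h1
    omega
  · have h1 := degreeOf_le_iff.mp (le_of_eq (degreeOf_phi i f)) _ (mem_support_iff.mpr h')
    rw [Finsupp.add_apply, Finsupp.single_eq_same] at h1
    omega

lemma phi_eq_self (i : Fin 6) (f : MvPolynomial (Fin 6) k)
    (hf : degreeOf i f ≤ 0) : phi i f = f := by
  obtain ⟨q, hq, hdq⟩ := split_degree i f 0 (le_trans hf (by omega))
  have hq0 : q = 0 := by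
    by_contra hne
    obtain ⟨m, hm⟩ := ne_zero_iff.mp hne
    have hc : coeff (Finsupp.single i 1 + m) (X i * q) ≠ 0 := by rwa [coeff_X_mul]
    have h : X i * q = f - phi i f := by linear_combination -hq
    rw [h, coeff_sub] at hc
    have hor : coeff (Finsupp.single i 1 + m) f ≠ 0 ∨
        coeff (Finsupp.single i 1 + m) (phi i f) ≠ 0 := by
      by_contra hcon
      push_neg at hcon
      rw [hcon.1, hcon.2, sub_zero] at hc
      exact hc rfl
    rcases hor with h' | h'
    · have h1 := degreeOf_le_iff.mp hf _ (mem_support_iff.mpr h')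
      rw [Finsupp.add_apply, Finsupp.single_eq_same] at h1
      omega
    · have h1 := degreeOf_le_iff.mp (le_of_eq (degreeOf_phi i f)) _ (mem_support_iff.mpr h')
      rw [Finsupp.add_apply, Finsupp.single_eq_same] at h1
      omega
  rw [hq0, mul_zero, zero_add] at hq
  exact hq.symm

/-! ### The Segre-type substitution `ψ` -/

noncomputable def pim : Fin 6 → MvPolynomial (Fin 6) k
  | 0 => X 0 * X 3
  | 1 => X 0 * X 4
  | 2 => X 2
  | 3 => X 1 * X 3
  | 4 => X 1 * X 4
  | 5 => X 5

noncomputable def psi : MvPolynomial (Fin 6) k →ₐ[k] MvPolynomial (Fin 6) k := aeval pim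

@[simp] lemma psi_X0 : psi (k := k) (X 0) = X 0 * X 3 := by rw [psi, aeval_X]; rfl
@[simp] lemma psi_X1 : psi (k := k) (X 1) = X 0 * X 4 := by rw [psi, aeval_X]; rfl
@[simp] lemma psi_X2 : psi (k := k) (X 2) = X 2 := by rw [psi, aeval_X]; rfl
@[simp] lemma psi_X3 : psi (k := k) (X 3) = X 1 * X 3 := by rw [psi, aeval_X]; rfl
@[simp] lemma psi_X4 : psi (k := k) (X 4) = X 1 * X 4 := by rw [psi, aeval_X]; rfl
@[simp] lemma psi_X5 : psi (k := k) (X 5) = X 5 := by rw [psi, aeval_X]; rfl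

lemma psi_Delta : psi (k := k) (X 1 * X 3 - X 0 * X 4) = 0 := by
  rw [map_sub, map_mul, map_mul, psi_X1, psi_X3, psi_X0, psi_X4]; ring

/-- Retraction killing `v`: composes with `ψ` to give the map `x₁,y₁ ↦ 0`. -/
noncomputable def c2m : Fin 6 → MvPolynomial (Fin 6) k
  | 0 => X 0
  | 1 => X 3
  | 2 => X 2
  | 3 => 1
  | 4 => 0
  | 5 => X 5

noncomputable def chi2 : MvPolynomial (Fin 6) k →ₐ[k] MvPolynomial (Fin 6) k := aeval c2m

@[simp] lemma chi2_X0 : chi2 (k := k) (X 0) = X 0 := by rw [chi2, aeval_X]; rfl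
@[simp] lemma chi2_X1 : chi2 (k := k) (X 1) = X 3 := by rw [chi2, aeval_X]; rfl
@[simp] lemma chi2_X2 : chi2 (k := k) (X 2) = X 2 := by rw [chi2, aeval_X]; rfl
@[simp] lemma chi2_X3 : chi2 (k := k) (X 3) = 1 := by rw [chi2, aeval_X]; rfl
@[simp] lemma chi2_X4 : chi2 (k := k) (X 4) = 0 := by rw [chi2, aeval_X]; rfl
@[simp] lemma chi2_X5 : chi2 (k := k) (X 5) = X 5 := by rw [chi2, aeval_X]; rfl

lemma phi_X_ne' (i j : Fin 6) (h : j ≠ i) : phi (k := k) i (X j) = X j := phi_X_ne i j h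

lemma chi2_psi (f : MvPolynomial (Fin 6) k) : chi2 (psi f) = phi 4 (phi 1 f) := by
  have hcomp : (chi2 (k := k)).comp psi = (phi 4).comp (phi 1) := by
    apply MvPolynomial.algHom_ext
    intro j
    simp only [AlgHom.comp_apply]
    fin_cases j
    · show chi2 (psi (X 0)) = phi 4 (phi 1 (X 0))
      rw [psi_X0, map_mul, chi2_X0, chi2_X3, mul_one,
        phi_X_ne' 1 0 (by decide), phi_X_ne' 4 0 (by decide)]
    · show chi2 (psi (X 1)) = phi 4 (phi 1 (X 1))
      rw [psi_X1, map_mul, chi2_X0, chi2_X4, mul_zero, phi_X_self, map_zero]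
    · show chi2 (psi (X 2)) = phi 4 (phi 1 (X 2))
      rw [psi_X2, chi2_X2, phi_X_ne' 1 2 (by decide), phi_X_ne' 4 2 (by decide)]
    · show chi2 (psi (X 3)) = phi 4 (phi 1 (X 3))
      rw [psi_X3, map_mul, chi2_X1, chi2_X3, mul_one,
        phi_X_ne' 1 3 (by decide), phi_X_ne' 4 3 (by decide)]
    · show chi2 (psi (X 4)) = phi 4 (phi 1 (X 4))
      rw [psi_X4, map_mul, chi2_X1, chi2_X4, mul_zero,
        phi_X_ne' 1 4 (by decide), phi_X_self]
    · show chi2 (psi (X 5)) = phi 4 (phi 1 (X 5))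
      rw [psi_X5, chi2_X5, phi_X_ne' 1 5 (by decide), phi_X_ne' 4 5 (by decide)]
  exact DFunLike.congr_fun hcomp f

noncomputable def c3m : Fin 6 → MvPolynomial (Fin 6) k
  | 0 => X 1
  | 1 => X 4
  | 2 => X 2
  | 3 => 0
  | 4 => 1
  | 5 => X 5

noncomputable def chi3 : MvPolynomial (Fin 6) k →ₐ[k] MvPolynomial (Fin 6) k := aeval c3m

@[simp] lemma chi3_X0 : chi3 (k := k) (X 0) = X 1 := by rw [chi3, aeval_X]; rfl
@[simp] lemma chi3_X1 : chi3 (k := k) (X 1) = X 4 := by rw [chi3, aeval_X]; rfl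
@[simp] lemma chi3_X2 : chi3 (k := k) (X 2) = X 2 := by rw [chi3, aeval_X]; rfl
@[simp] lemma chi3_X3 : chi3 (k := k) (X 3) = 0 := by rw [chi3, aeval_X]; rfl
@[simp] lemma chi3_X4 : chi3 (k := k) (X 4) = 1 := by rw [chi3, aeval_X]; rfl
@[simp] lemma chi3_X5 : chi3 (k := k) (X 5) = X 5 := by rw [chi3, aeval_X]; rfl

lemma chi3_psi (f : MvPolynomial (Fin 6) k) : chi3 (psi f) = phi 3 (phi 0 f) := by
  have hcomp : (chi3 (k := k)).comp psi = (phi 3).comp (phi 0) := by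
    apply MvPolynomial.algHom_ext
    intro j
    simp only [AlgHom.comp_apply]
    fin_cases j
    · show chi3 (psi (X 0)) = phi 3 (phi 0 (X 0))
      rw [psi_X0, map_mul, chi3_X0, chi3_X3, mul_zero, phi_X_self, map_zero]
    · show chi3 (psi (X 1)) = phi 3 (phi 0 (X 1))
      rw [psi_X1, map_mul, chi3_X0, chi3_X4, mul_one,
        phi_X_ne' 0 1 (by decide), phi_X_ne' 3 1 (by decide)]
    · show chi3 (psi (X 2)) = phi 3 (phi 0 (X 2))
      rw [psi_X2, chi3_X2, phi_X_ne' 0 2 (by decide), phi_X_ne' 3 2 (by decide)]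
    · show chi3 (psi (X 3)) = phi 3 (phi 0 (X 3))
      rw [psi_X3, map_mul, chi3_X1, chi3_X3, mul_zero,
        phi_X_ne' 0 3 (by decide), phi_X_self]
    · show chi3 (psi (X 4)) = phi 3 (phi 0 (X 4))
      rw [psi_X4, map_mul, chi3_X1, chi3_X4, mul_one,
        phi_X_ne' 0 4 (by decide), phi_X_ne' 3 4 (by decide)]
    · show chi3 (psi (X 5)) = phi 3 (phi 0 (X 5))
      rw [psi_X5, chi3_X5, phi_X_ne' 0 5 (by decide), phi_X_ne' 3 5 (by decide)]
  exact DFunLike.congr_fun hcomp f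

section J1

set_option maxHeartbeats 1000000

noncomputable def em : MvPolynomial (Fin 6) k →+* FractionRing (MvPolynomial (Fin 6) k) :=
  algebraMap _ _

lemma em_inj : Function.Injective (em (k := k)) := IsFractionRing.injective _ _

lemma em_X_ne (i : Fin 6) : em (k := k) (X i) ≠ 0 := by
  intro h
  exact X_ne_zero i (em_inj (by rw [h, map_zero]))

noncomputable def g1 : Fin 6 → FractionRing (MvPolynomial (Fin 6) k)
  | 0 => em (X 0)
  | 1 => em (X 0) * em (X 4) / em (X 1)
  | 2 => em (X 2)
  | 3 => 1
  | 4 => em (X 1) / em (X 0)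
  | 5 => em (X 5)

noncomputable def chi1 : MvPolynomial (Fin 6) k →+* FractionRing (MvPolynomial (Fin 6) k) :=
  eval₂Hom ((em (k := k)).comp (C : k →+* MvPolynomial (Fin 6) k)) g1

@[simp] lemma chi1_X (i : Fin 6) : chi1 (k := k) (X i) = g1 i := by
  rw [chi1, eval₂Hom_X']

lemma psi_inj_y0free (f : MvPolynomial (Fin 6) k) (hf : phi 3 f = f)
    (h : psi f = 0) : f = 0 := by
  have hcomp : (chi1 (k := k)).comp ((psi.toRingHom).comp (phi 3).toRingHom)
      = (em (k := k)).comp (phi 3).toRingHom := by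
    apply MvPolynomial.ringHom_ext
    · intro a
      simp only [RingHom.comp_apply, AlgHom.toRingHom_eq_coe, RingHom.coe_coe]
      have h1 : phi (k := k) 3 (C a) = C a := by simp [phi]
      have h2 : psi (k := k) (C a) = C a := by simp [psi]
      rw [h1, h2, chi1, eval₂Hom_C, RingHom.comp_apply]
    · intro j
      simp only [RingHom.comp_apply, AlgHom.toRingHom_eq_coe, RingHom.coe_coe]
      fin_cases j
      · show chi1 (psi (phi 3 (X 0))) = em (phi 3 (X 0))
        rw [phi_X_ne' 3 0 (by decide), psi_X0, map_mul, chi1_X, chi1_X]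
        show em (X 0) * 1 = _
        rw [mul_one]
      · show chi1 (psi (phi 3 (X 1))) = em (phi 3 (X 1))
        rw [phi_X_ne' 3 1 (by decide), psi_X1, map_mul, chi1_X, chi1_X]
        show em (X 0) * (em (X 1) / em (X 0)) = _
        field_simp [em_X_ne]
      · show chi1 (psi (phi 3 (X 2))) = em (phi 3 (X 2))
        rw [phi_X_ne' 3 2 (by decide), psi_X2, chi1_X]
        rfl
      · show chi1 (psi (phi 3 (X 3))) = em (phi 3 (X 3))
        rw [phi_X_self, map_zero, map_zero, map_zero]
      · show chi1 (psi (phi 3 (X 4))) = em (phi 3 (X 4))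
        rw [phi_X_ne' 3 4 (by decide), psi_X4, map_mul, chi1_X, chi1_X]
        show em (X 0) * em (X 4) / em (X 1) * (em (X 1) / em (X 0)) = _
        field_simp [em_X_ne]
      · show chi1 (psi (phi 3 (X 5))) = em (phi 3 (X 5))
        rw [phi_X_ne' 3 5 (by decide), psi_X5, chi1_X]
        rfl
  have hfe := congrArg (fun g => g f) (congrArg DFunLike.coe hcomp)
  simp only [RingHom.comp_apply, AlgHom.toRingHom_eq_coe, RingHom.coe_coe] at hfe
  rw [hf, h, map_zero] at hfe
  exact em_inj (by rw [map_zero]; exact hfe.symm)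

end J1

lemma X_mul_ne (i : Fin 6) {h : MvPolynomial (Fin 6) k} (hh : h ≠ 0) : X i * h ≠ 0 :=
  mul_ne_zero (X_ne_zero i) hh

theorem psi_ker : ∀ (n : ℕ) (f : MvPolynomial (Fin 6) k), degreeOf 3 f ≤ n →
    psi f = 0 → ∃ g, f = (X 1 * X 3 - X 0 * X 4) * g := by
  intro n
  induction n with
  | zero =>
      intro f hdeg h0
      have hf := phi_eq_self 3 f hdeg
      exact ⟨0, by rw [psi_inj_y0free f hf h0, mul_zero]⟩
  | succ n ih =>
      intro f hdeg h0
      obtain ⟨q, hsplit, hq⟩ := split_degree 3 f n hdeg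
      have hstep : X 0 * X 4 * q + X 1 * phi 3 f
          = X 1 * f - (X 1 * X 3 - X 0 * X 4) * q := by
        linear_combination (-(X 1 : MvPolynomial (Fin 6) k)) * hsplit
      have hpsi' : psi (X 0 * X 4 * q + X 1 * phi 3 f) = 0 := by
        rw [hstep, map_sub, map_mul, h0, mul_zero, map_mul, psi_Delta, zero_mul, sub_zero]
      have hdeg' : degreeOf 3 (X 0 * X 4 * q + X 1 * phi 3 f) ≤ n := by
        refine le_trans (degreeOf_add_le _ _ _) ?_
        have d1 : degreeOf 3 (X 0 * X 4 * q) ≤ n := by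
          refine le_trans (degreeOf_mul_le _ _ _) ?_
          have : degreeOf 3 (X 0 * X 4 : MvPolynomial (Fin 6) k) = 0 := by
            refine Nat.le_zero.mp (le_trans (degreeOf_mul_le _ _ _) ?_)
            rw [degreeOf_X, degreeOf_X]
            decide
          omega
        have d2 : degreeOf 3 (X 1 * phi 3 f) ≤ n := by
          refine le_trans (degreeOf_mul_le _ _ _) ?_
          have e1 : degreeOf 3 (X 1 : MvPolynomial (Fin 6) k) = 0 := by
            rw [degreeOf_X]; decide
          have e2 := degreeOf_phi (k := k) 3 f
          omega
        omega
      obtain ⟨g', hg'⟩ := ih _ hdeg' hpsi'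
      have hX1f : X 1 * f = (X 1 * X 3 - X 0 * X 4) * (q + g') := by
        linear_combination hsplit * (X 1 : MvPolynomial (Fin 6) k) + hg'
      have h1 : phi 1 (q + g') = 0 := by
        have hc := congrArg (phi 1) hX1f
        rw [map_mul, phi_X_self, zero_mul, map_mul, map_sub, map_mul, map_mul,
          phi_X_self, phi_X_ne' 1 3 (by decide), phi_X_ne' 1 0 (by decide),
          phi_X_ne' 1 4 (by decide), zero_mul, zero_sub] at hc
        have := hc.symm
        rw [neg_mul, neg_eq_zero, mul_eq_zero, mul_eq_zero] at this
        rcases this with (h | h) | h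
        · exact absurd h (X_ne_zero 0)
        · exact absurd h (X_ne_zero 4)
        · exact h
      obtain ⟨h', hh'⟩ := exists_split 1 (q + g')
      rw [h1, add_zero] at hh'
      refine ⟨h', mul_left_cancel₀ (X_ne_zero 1) ?_⟩
      rw [hX1f, hh']
      ring

/-- Koszul syzygies of the regular sequence `x₀, x₁, y₀, y₁`. -/
lemma koszul4 (p q r s : MvPolynomial (Fin 6) k)
    (h : X 0 * p + X 1 * q + X 3 * r + X 4 * s = 0) :
    ∃ b12 b13 b14 b23 b24 b34,
      p = X 1 * b12 + X 3 * b13 + X 4 * b14 ∧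
      q = -(X 0) * b12 + X 3 * b23 + X 4 * b24 ∧
      r = -(X 0) * b13 - X 1 * b23 + X 4 * b34 ∧
      s = -(X 0) * b14 - X 1 * b24 - X 3 * b34 := by
  obtain ⟨q', hq'⟩ := exists_split 0 q
  obtain ⟨r', hr'⟩ := exists_split 0 r
  obtain ⟨s', hs'⟩ := exists_split 0 s
  have h1 : X 0 * (p + X 1 * q' + X 3 * r' + X 4 * s')
      + (X 1 * phi 0 q + X 3 * phi 0 r + X 4 * phi 0 s) = 0 := by
    linear_combination h - X 1 * hq' - X 3 * hr' - X 4 * hs'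
  have hinv1 : phi 0 (X 1 * phi 0 q + X 3 * phi 0 r + X 4 * phi 0 s)
      = X 1 * phi 0 q + X 3 * phi 0 r + X 4 * phi 0 s := by
    rw [map_add, map_add, map_mul, map_mul, map_mul,
      phi_X_ne' 0 1 (by decide), phi_X_ne' 0 3 (by decide), phi_X_ne' 0 4 (by decide),
      phi_phi, phi_phi, phi_phi]
  obtain ⟨hp, h2⟩ := split_zero hinv1 h1
  obtain ⟨r1, hr1⟩ := exists_split 1 (phi 0 r)
  obtain ⟨s1, hs1⟩ := exists_split 1 (phi 0 s)
  have h3 : X 1 * (phi 0 q + X 3 * r1 + X 4 * s1)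
      + (X 3 * phi 1 (phi 0 r) + X 4 * phi 1 (phi 0 s)) = 0 := by
    linear_combination h2 - X 3 * hr1 - X 4 * hs1
  have hinv2 : phi 1 (X 3 * phi 1 (phi 0 r) + X 4 * phi 1 (phi 0 s))
      = X 3 * phi 1 (phi 0 r) + X 4 * phi 1 (phi 0 s) := by
    rw [map_add, map_mul, map_mul,
      phi_X_ne' 1 3 (by decide), phi_X_ne' 1 4 (by decide), phi_phi, phi_phi]
  obtain ⟨hq0, h4⟩ := split_zero hinv2 h3
  obtain ⟨t, ht⟩ := exists_split 3 (phi 1 (phi 0 s))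
  have h5 : X 3 * (phi 1 (phi 0 r) + X 4 * t) + X 4 * phi 3 (phi 1 (phi 0 s)) = 0 := by
    linear_combination h4 - X 4 * ht
  have hinv3 : phi 3 (X 4 * phi 3 (phi 1 (phi 0 s))) = X 4 * phi 3 (phi 1 (phi 0 s)) := by
    rw [map_mul, phi_X_ne' 3 4 (by decide), phi_phi]
  obtain ⟨hr2, h6⟩ := split_zero hinv3 h5
  have hs3 : phi 3 (phi 1 (phi 0 s)) = 0 := by
    rcases mul_eq_zero.mp h6 with h' | h'
    · exact absurd h' (X_ne_zero 4)
    · exact h'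
  refine ⟨-q', -r', -s', -r1, -s1, -t, ?_, ?_, ?_, ?_⟩
  · linear_combination hp
  · linear_combination hq' + hq0
  · linear_combination hr' + hr1 + hr2
  · linear_combination hs' + hs1 + ht + hs3
lemma syz_uvv (B C D : MvPolynomial (Fin 6) k)
    (h : X 3 ^ 2 * B + X 3 * X 4 * C + X 4 ^ 2 * D = 0) :
    ∃ P Q, B = X 4 * P ∧ C = -(X 3) * P + X 4 * Q ∧ D = -(X 3) * Q := by
  obtain ⟨D1, hD1⟩ := exists_split 3 D
  have h1 : X 3 * (X 3 * B + X 4 * C + X 4 ^ 2 * D1) + X 4 ^ 2 * phi 3 D = 0 := by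
    linear_combination h - X 4 ^ 2 * hD1
  have hinv1 : phi 3 (X 4 ^ 2 * phi 3 D) = X 4 ^ 2 * phi 3 D := by
    rw [map_mul, map_pow, phi_X_ne' 3 4 (by decide), phi_phi]
  obtain ⟨h2, h3⟩ := split_zero hinv1 h1
  have hD0 : phi 3 D = 0 := by
    rcases mul_eq_zero.mp h3 with h' | h'
    · exact absurd h' (pow_ne_zero 2 (X_ne_zero 4))
    · exact h'
  obtain ⟨g, hg⟩ := exists_split 3 (C + X 4 * D1)
  have h4 : X 3 * (B + X 4 * g) + X 4 * phi 3 (C + X 4 * D1) = 0 := by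
    linear_combination h2 - X 4 * hg
  have hinv2 : phi 3 (X 4 * phi 3 (C + X 4 * D1)) = X 4 * phi 3 (C + X 4 * D1) := by
    rw [map_mul, phi_X_ne' 3 4 (by decide), phi_phi]
  obtain ⟨h5, h6⟩ := split_zero hinv2 h4
  have hC0 : phi 3 (C + X 4 * D1) = 0 := by
    rcases mul_eq_zero.mp h6 with h' | h'
    · exact absurd h' (X_ne_zero 4)
    · exact h'
  refine ⟨-g, -D1, ?_, ?_, ?_⟩
  · linear_combination h5
  · linear_combination hg + hC0
  · linear_combination hD1 + hD0

lemma mem_x1y1 (b P : MvPolynomial (Fin 6) k) (hb : psi b = X 4 * P) :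
    ∃ f g, b = X 1 * f + X 4 * g ∧ P = X 0 * psi f + X 1 * psi g := by
  have h1 : phi 4 (phi 1 b) = 0 := by
    rw [← chi2_psi, hb, map_mul, chi2_X4, zero_mul]
  obtain ⟨f, hf⟩ := exists_split 1 b
  obtain ⟨g, hg⟩ := exists_split 4 (phi 1 b)
  rw [h1, add_zero] at hg
  have hbfg : b = X 1 * f + X 4 * g := by rw [hf, hg]
  have h2 : X 4 * P = X 4 * (X 0 * psi f + X 1 * psi g) := by
    rw [← hb, hbfg, map_add, map_mul, map_mul, psi_X1, psi_X4]
    ring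
  exact ⟨f, g, hbfg, mul_left_cancel₀ (X_ne_zero 4) h2⟩

lemma mem_x0y0 (d Q : MvPolynomial (Fin 6) k) (hd : psi d = X 3 * Q) :
    ∃ f g, d = X 0 * f + X 3 * g ∧ Q = X 0 * psi f + X 1 * psi g := by
  have h1 : phi 3 (phi 0 d) = 0 := by
    rw [← chi3_psi, hd, map_mul, chi3_X3, zero_mul]
  obtain ⟨f, hf⟩ := exists_split 0 d
  obtain ⟨g, hg⟩ := exists_split 3 (phi 0 d)
  rw [h1, add_zero] at hg
  have hdfg : d = X 0 * f + X 3 * g := by rw [hf, hg]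
  have h2 : X 3 * Q = X 3 * (X 0 * psi f + X 1 * psi g) := by
    rw [← hd, hdfg, map_add, map_mul, map_mul, psi_X0, psi_X3]
    ring
  exact ⟨f, g, hdfg, mul_left_cancel₀ (X_ne_zero 3) h2⟩

lemma Delta_ne : (X 1 * X 3 - X 0 * X 4 : MvPolynomial (Fin 6) k) ≠ 0 := by
  intro h
  have h2 := congrArg (eval (![0, 1, 0, 1, 0, 0] : Fin 6 → k)) h
  simp at h2

lemma E_ne : (X 2 * X 1 ^ 2 - X 0 ^ 2 * X 5 : MvPolynomial (Fin 6) k) ≠ 0 := by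
  intro h
  have h2 := congrArg (eval (![0, 1, 1, 0, 0, 0] : Fin 6 → k)) h
  simp at h2

/-- The main syzygy computation: the kernel of `M₁` is contained in the image of `M₂`. -/
lemma main_syz (v0 v1 v2 v3 v4 : MvPolynomial (Fin 6) k)
    (he1 : (X 1 * X 3 - X 0 * X 4) * v0 + X 2 * X 3 * v1 + X 2 * X 4 * v2
      + X 0 * X 5 * v3 + X 1 * X 5 * v4 = 0)
    (he2 : X 0 * v1 + X 1 * v2 + X 3 * v3 + X 4 * v4 = 0) :
    ∃ a0 a1 a2,
      v0 = -(X 2) * a0 - X 5 * a2 ∧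
      v1 = X 1 * a0 - X 4 * a1 ∧
      v2 = -(X 0) * a0 + X 3 * a1 ∧
      v3 = -(X 1) * a1 - X 4 * a2 ∧
      v4 = X 0 * a1 + X 3 * a2 := by
  obtain ⟨b12, b13, b14, b23, b24, b34, hr1, hr2, hr3, hr4⟩ := koszul4 v1 v2 v3 v4 he2
  have hD : (X 1 * X 3 - X 0 * X 4) * (v0 + X 2 * b12 - X 5 * b34)
      + (X 2 * X 3 ^ 2 - X 0 ^ 2 * X 5) * b13
      + (X 2 * X 3 * X 4 - X 0 * X 1 * X 5) * (b14 + b23)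
      + (X 2 * X 4 ^ 2 - X 1 ^ 2 * X 5) * b24 = 0 := by
    linear_combination he1 - X 2 * X 3 * hr1 - X 2 * X 4 * hr2 - X 0 * X 5 * hr3
      - X 1 * X 5 * hr4
  have hpsiD := congrArg psi hD
  rw [map_add, map_add, map_add, map_zero, map_mul, map_mul, map_mul, map_mul] at hpsiD
  rw [psi_Delta, zero_mul, zero_add] at hpsiD
  have hA : psi (k := k) (X 2 * X 3 ^ 2 - X 0 ^ 2 * X 5)
      = (X 2 * X 1 ^ 2 - X 0 ^ 2 * X 5) * X 3 ^ 2 := by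
    rw [map_sub, map_mul, map_mul, map_pow, map_pow, psi_X2, psi_X3, psi_X0, psi_X5]
    ring
  have hB : psi (k := k) (X 2 * X 3 * X 4 - X 0 * X 1 * X 5)
      = (X 2 * X 1 ^ 2 - X 0 ^ 2 * X 5) * (X 3 * X 4) := by
    rw [map_sub, map_mul, map_mul, map_mul, map_mul, psi_X2, psi_X3, psi_X4, psi_X0,
      psi_X1, psi_X5]
    ring
  have hCC : psi (k := k) (X 2 * X 4 ^ 2 - X 1 ^ 2 * X 5)
      = (X 2 * X 1 ^ 2 - X 0 ^ 2 * X 5) * X 4 ^ 2 := by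
    rw [map_sub, map_mul, map_mul, map_pow, map_pow, psi_X2, psi_X4, psi_X1, psi_X5]
    ring
  rw [hA, hB, hCC] at hpsiD
  have hsum : X 3 ^ 2 * psi b13 + X 3 * X 4 * psi (b14 + b23) + X 4 ^ 2 * psi b24 = 0 := by
    have hfac : (X 2 * X 1 ^ 2 - X 0 ^ 2 * X 5)
        * (X 3 ^ 2 * psi b13 + X 3 * X 4 * psi (b14 + b23) + X 4 ^ 2 * psi b24) = 0 := by
      linear_combination hpsiD
    rcases mul_eq_zero.mp hfac with h' | h'
    · exact absurd h' E_ne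
    · exact h'
  obtain ⟨P, Q, hPb, hPc, hPd⟩ := syz_uvv _ _ _ hsum
  obtain ⟨f, g, hb13, hP⟩ := mem_x1y1 b13 P hPb
  obtain ⟨f2, g2, hb24, hQ⟩ := mem_x0y0 b24 (-Q) (by rw [hPd]; ring)
  have hker : psi ((b14 + b23) + X 0 * f + X 3 * g + X 1 * f2 + X 4 * g2) = 0 := by
    rw [map_add, map_add, map_add, map_add, map_mul, map_mul, map_mul, map_mul,
      psi_X0, psi_X1, psi_X3, psi_X4, hPc]
    linear_combination (-(X 3 : MvPolynomial (Fin 6) k)) * hP - X 4 * hQ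
  obtain ⟨nu, hnu⟩ := psi_ker _ _ le_rfl hker
  set c1 : MvPolynomial (Fin 6) k := f + X 4 * nu with hc1
  set c2 : MvPolynomial (Fin 6) k := -f2 with hc2
  set c3 : MvPolynomial (Fin 6) k := -g + X 1 * nu with hc3
  set c4 : MvPolynomial (Fin 6) k := g2 with hc4
  have h13 : b13 - X 1 * c1 + X 4 * c3 = 0 := by
    rw [hc1, hc3]; linear_combination hb13
  have h24 : b24 + X 0 * c2 - X 3 * c4 = 0 := by
    rw [hc2, hc4]; linear_combination hb24
  have hc : (b14 + b23) + X 0 * c1 - X 1 * c2 - X 3 * c3 + X 4 * c4 = 0 := by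
    rw [hc1, hc2, hc3, hc4]; linear_combination hnu
  refine ⟨b12 + X 3 * c1 + X 4 * c2, b23 + X 0 * c1 + X 4 * c4,
    -(b34 + X 0 * c3 + X 1 * c4), ?_, ?_, ?_, ?_, ?_⟩
  · have hv0 : (X 1 * X 3 - X 0 * X 4)
        * (v0 - (-(X 2) * (b12 + X 3 * c1 + X 4 * c2) - X 5 * (-(b34 + X 0 * c3 + X 1 * c4)))) = 0 := by
      linear_combination hD - (X 2 * X 3 ^ 2 - X 0 ^ 2 * X 5) * h13
        - (X 2 * X 3 * X 4 - X 0 * X 1 * X 5) * hc - (X 2 * X 4 ^ 2 - X 1 ^ 2 * X 5) * h24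
    rcases mul_eq_zero.mp hv0 with h' | h'
    · exact absurd h' Delta_ne
    · linear_combination h'
  · linear_combination hr1 + X 3 * h13 + X 4 * hc
  · linear_combination hr2 + X 4 * h24
  · linear_combination hr3 - X 0 * h13
  · linear_combination hr4 - X 1 * h24 - X 0 * hc

/-- Injectivity of `M₂`. -/
lemma M2_inj_aux (a0 a1 a2 : MvPolynomial (Fin 6) k)
    (h1 : X 1 * a0 - X 4 * a1 = 0) (h2 : -(X 0) * a0 + X 3 * a1 = 0)
    (h4 : X 0 * a1 + X 3 * a2 = 0) :
    a0 = 0 ∧ a1 = 0 ∧ a2 = 0 := by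
  obtain ⟨u, hu⟩ := exists_split 1 a1
  have hsz : X 1 * (a0 - X 4 * u) + (-(X 4) * phi 1 a1) = 0 := by
    linear_combination h1 + X 4 * hu
  have hinv : phi 1 (-(X 4) * phi 1 a1) = -(X 4) * phi 1 a1 := by
    rw [map_mul, map_neg, phi_X_ne' 1 4 (by decide), phi_phi]
  obtain ⟨ha0d, hr⟩ := split_zero hinv hsz
  have hphi : phi 1 a1 = 0 := by
    have hxr : X 4 * phi 1 a1 = 0 := by linear_combination -hr
    rcases mul_eq_zero.mp hxr with h' | h'
    · exact absurd h' (X_ne_zero 4)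
    · exact h'
  have ha1 : a1 = X 1 * u := by rw [hu, hphi, add_zero]
  have ha0 : a0 = X 4 * u := by linear_combination ha0d
  have hDu : (X 1 * X 3 - X 0 * X 4) * u = 0 := by
    linear_combination h2 + X 0 * ha0 - X 3 * ha1
  have hu0 : u = 0 := by
    rcases mul_eq_zero.mp hDu with h' | h'
    · exact absurd h' Delta_ne
    · exact h'
  have ha1z : a1 = 0 := by rw [ha1, hu0, mul_zero]
  have ha0z : a0 = 0 := by rw [ha0, hu0, mul_zero]
  rw [ha1z, mul_zero, zero_add] at h4
  rcases mul_eq_zero.mp h4 with h' | h'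
  · exact absurd h' (X_ne_zero 3)
  · exact ⟨ha0z, ha1z, h'⟩

end FRN112



open FRN112 in
/-- Let `k` be a field and `T = k[x₀,x₁,x₂,y₀,y₁,y₂]` (variables indexed
by `Fin 6`: `X 0 = x₀`, `X 1 = x₁`, `X 2 = x₂`, `X 3 = y₀`, `X 4 = y₁`, `X 5 = y₂`).
Let `M₁` be the `2×5` matrix with rows `(x₁y₀ − x₀y₁, x₂y₀, x₂y₁, x₀y₂, x₁y₂)` and
`(0, −x₀, −x₁, −y₀, −y₁)`, and `M₂` the `5×3` matrix with rows `(−x₂, 0, −y₂)`,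
`(x₁, −y₁, 0)`, `(−x₀, y₀, 0)`, `(0, −x₁, −y₁)`, `(0, x₀, y₀)`.  Then `M₁·M₂ = 0`, the
kernel of the `T`-linear map `T⁵ → T²` given by `M₁` equals the image of the `T`-linear
map `T³ → T⁵` given by `M₂`, and the latter map is injective. -/
theorem free_resolution_normalization_P112
    (k : Type*) [Field k]
    (M₁ : Matrix (Fin 2) (Fin 5) (MvPolynomial (Fin 6) k))
    (M₂ : Matrix (Fin 5) (Fin 3) (MvPolynomial (Fin 6) k))
    (hM₁ : M₁ = !![X 1 * X 3 - X 0 * X 4, X 2 * X 3, X 2 * X 4, X 0 * X 5, X 1 * X 5;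
                   0, -X 0, -X 1, -X 3, -X 4])
    (hM₂ : M₂ = !![-X 2, 0, -X 5;
                   X 1, -X 4, 0;
                   -X 0, X 3, 0;
                   0, -X 1, -X 4;
                   0, X 0, X 3]) :
    M₁ * M₂ = 0 ∧
      LinearMap.ker M₁.mulVecLin = LinearMap.range M₂.mulVecLin ∧
      Function.Injective M₂.mulVecLin := by
  subst hM₁ hM₂
  have hMM : (!![X 1 * X 3 - X 0 * X 4, X 2 * X 3, X 2 * X 4, X 0 * X 5, X 1 * X 5;
        0, -X 0, -X 1, -X 3, -X 4] : Matrix (Fin 2) (Fin 5) (MvPolynomial (Fin 6) k))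
      * (!![-X 2, 0, -X 5; X 1, -X 4, 0; -X 0, X 3, 0; 0, -X 1, -X 4; 0, X 0, X 3]
        : Matrix (Fin 5) (Fin 3) (MvPolynomial (Fin 6) k)) = 0 := by
    apply Matrix.ext
    intro i j
    rw [Matrix.mul_apply, Fin.sum_univ_five, Matrix.zero_apply]
    fin_cases i <;> fin_cases j <;>
      · simp [Matrix.vecHead, Matrix.vecTail]
        try ring
  refine ⟨hMM, ?_, ?_⟩
  · ext x
    simp only [LinearMap.mem_ker, LinearMap.mem_range, Matrix.mulVecLin_apply]
    constructor
    · intro hx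
      have h0 := congrFun hx 0
      have h1 := congrFun hx 1
      simp [Matrix.mulVec, dotProduct, Fin.sum_univ_five] at h0 h1
      have he1 : (X 1 * X 3 - X 0 * X 4) * x 0 + X 2 * X 3 * x 1 + X 2 * X 4 * x 2
          + X 0 * X 5 * x 3 + X 1 * X 5 * x 4 = 0 := by linear_combination h0
      have he2 : X 0 * x 1 + X 1 * x 2 + X 3 * x 3 + X 4 * x 4 = 0 := by
        linear_combination -h1
      obtain ⟨a0, a1, a2, hw0, hw1, hw2, hw3, hw4⟩ :=
        main_syz (x 0) (x 1) (x 2) (x 3) (x 4) he1 he2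
      refine ⟨![a0, a1, a2], ?_⟩
      funext i
      fin_cases i
      · show (Matrix.mulVec _ ![a0, a1, a2]) 0 = x 0
        simp [Matrix.mulVec, dotProduct, Fin.sum_univ_three]
        linear_combination -hw0
      · show (Matrix.mulVec _ ![a0, a1, a2]) 1 = x 1
        simp [Matrix.mulVec, dotProduct, Fin.sum_univ_three]
        linear_combination -hw1
      · show (Matrix.mulVec _ ![a0, a1, a2]) 2 = x 2
        simp [Matrix.mulVec, dotProduct, Fin.sum_univ_three]
        linear_combination -hw2
      · show (Matrix.mulVec _ ![a0, a1, a2]) 3 = x 3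
        simp [Matrix.mulVec, dotProduct, Fin.sum_univ_three]
        linear_combination -hw3
      · show (Matrix.mulVec _ ![a0, a1, a2]) 4 = x 4
        simp [Matrix.mulVec, dotProduct, Fin.sum_univ_three]
        linear_combination -hw4
    · rintro ⟨y, hy⟩
      rw [← hy, Matrix.mulVec_mulVec, hMM, Matrix.zero_mulVec]
  · have hker : ∀ a : Fin 3 → MvPolynomial (Fin 6) k,
        Matrix.mulVec !![-X 2, 0, -X 5; X 1, -X 4, 0; -X 0, X 3, 0;
          0, -X 1, -X 4; 0, X 0, X 3] a = 0 → a = 0 := by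
      intro a ha
      have g1 := congrFun ha 1
      have g2 := congrFun ha 2
      have g4 := congrFun ha 4
      simp [Matrix.mulVec, dotProduct, Fin.sum_univ_three] at g1 g2 g4
      obtain ⟨hz0, hz1, hz2⟩ := M2_inj_aux (a 0) (a 1) (a 2)
        (by linear_combination g1) (by linear_combination g2) (by linear_combination g4)
      funext j
      fin_cases j
      · exact hz0
      · exact hz1
      · exact hz2
    intro u v huv
    have hsub : Matrix.mulVec !![-X 2, 0, -X 5; X 1, -X 4, 0; -X 0, X 3, 0;
        0, -X 1, -X 4; 0, X 0, X 3] (u - v) = 0 := by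
      have := sub_eq_zero.mpr huv
      rw [← map_sub] at this
      simpa [Matrix.mulVecLin_apply] using this
    exact sub_eq_zero.mp (hker _ hsub)
end

section
/- Let k be an algebraically closed field, r ≥ 0 a natural number, and A a finite abelian group. Then the quotient of the group algebra k[ℤʳ × A] by its nilradical is isomorphic as a k-algebra to a finite product of copies of the Laurent polynomial ring k[ℤʳ] (the group algebra of ℤʳ over k); in particular, for r = 0, the quotient of k[A] by its nilradical is isomorphic to a finite product of copies of k. -/
/-- The residue field of a finite-dimensional commutative algebra over an algebraically
closed field is the field itself. -/
noncomputable def residueFieldEquiv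
    (k : Type*) [Field k] [IsAlgClosed k]
    (S : Type*) [CommRing S] [Algebra k S] [Module.Finite k S]
    (I : Ideal S) (hI : I.IsMaximal) : k ≃ₐ[k] (S ⧸ I) := by
  haveI : I.IsMaximal := hI
  haveI : Module.Finite k (S ⧸ I) :=
    Module.Finite.of_surjective (Ideal.Quotient.mkₐ k I).toLinearMap
      Ideal.Quotient.mk_surjective
  exact AlgEquiv.ofBijective (Algebra.ofId k (S ⧸ I))
    ⟨(algebraMap k (S ⧸ I)).injective, IsAlgClosed.algebraMap_bijective_of_isIntegral.2⟩

/-- A finite-dimensional commutative algebra over an algebraically closed field admits a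
surjection onto a finite power of the field whose kernel consists of nilpotents. -/
theorem finite_algebra_exists_surjection_pi
    (k : Type*) [Field k] [IsAlgClosed k]
    (S : Type*) [CommRing S] [Algebra k S] [Module.Finite k S] :
    ∃ (m : ℕ) (q : S →ₐ[k] (Fin m → k)),
      Function.Surjective q ∧ ∀ s : S, q s = 0 → IsNilpotent s := by
  classical
  haveI : IsArtinianRing S := IsArtinianRing.of_finite k S
  set ι := {I : Ideal S | I.IsMaximal} with hι
  haveI : Finite ι := (IsArtinianRing.setOfPred_isMaximal_finite S).to_subtype
  obtain ⟨m, ⟨eFin⟩⟩ := Finite.exists_equiv_fin ι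
  let e : ∀ i : ι, k ≃ₐ[k] (S ⧸ i.1) := fun i => residueFieldEquiv k S i.1 i.2
  refine ⟨m, Pi.algHom k _ (fun j : Fin m =>
      ((e (eFin.symm j)).symm.toAlgHom.comp (Ideal.Quotient.mkₐ k (eFin.symm j).1))), ?_, ?_⟩
  · -- surjectivity via the Chinese remainder theorem
    intro v
    have hI : Pairwise (Function.onFun IsCoprime fun i : ι => i.1) := fun I J h =>
      Ideal.isCoprime_iff_sup_eq.mpr <| I.2.coprime_of_ne J.2 <| by
        rwa [Ne, Subtype.coe_inj]
    obtain ⟨y, hy⟩ := Ideal.quotientInfToPiQuotient_surj hI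
      (fun i => e i (v (eFin i)))
    obtain ⟨s, rfl⟩ := Ideal.Quotient.mk_surjective y
    refine ⟨s, funext fun j => ?_⟩
    have h1 := congrFun hy (eFin.symm j)
    rw [Ideal.quotientInfToPiQuotient_mk'] at h1
    simp only [Pi.algHom_apply, AlgHom.coe_comp, Function.comp_apply, Ideal.Quotient.mkₐ_eq_mk,
      AlgHom.coe_coe]
    rw [h1, Equiv.apply_symm_apply]
    exact (e (eFin.symm j)).symm_apply_apply _
  · -- the kernel consists of nilpotents
    intro s hs
    have hmem : s ∈ Ideal.jacobson (⊥ : Ideal S) := by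
      rw [Ideal.jacobson]
      refine Ideal.mem_sInf.mpr fun {J} hJ => ?_
      set i : ι := ⟨J, hJ.2⟩ with hi
      have hj := congrFun hs (eFin i)
      simp only [Pi.algHom_apply, AlgHom.coe_comp, Function.comp_apply, Ideal.Quotient.mkₐ_eq_mk,
        AlgHom.coe_coe, Pi.zero_apply] at hj
      have h2 : Ideal.Quotient.mk ((eFin.symm (eFin i)).1) s = 0 :=
        (e (eFin.symm (eFin i))).symm.injective (by rw [map_zero]; exact hj)
      rw [eFin.symm_apply_apply] at h2
      exact Ideal.Quotient.eq_zero_iff_mem.mp h2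
    obtain ⟨n, hn⟩ := IsArtinianRing.isNilpotent_jacobson_bot (R := S)
    refine ⟨n, ?_⟩
    have h4 := Ideal.pow_mem_pow hmem n
    rw [hn] at h4
    simpa using h4

/-- Let `k` be an algebraically closed field, `r ≥ 0`, and `A` a finite
abelian group.  The quotient of the group algebra `k[ℤʳ × A]` by its nilradical is
isomorphic, as a `k`-algebra, to a finite product of copies of the Laurent polynomial ring
`k[ℤʳ]` (the group algebra of `ℤʳ` over `k`). -/
theorem groupAlgebra_mod_nilradical_iso_product
    (k : Type*) [Field k] [IsAlgClosed k] (r : ℕ)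
    (A : Type*) [AddCommGroup A] [Finite A] :
    ∃ m : ℕ,
      Nonempty
        ((AddMonoidAlgebra k ((Fin r → ℤ) × A) ⧸
            nilradical (AddMonoidAlgebra k ((Fin r → ℤ) × A))) ≃ₐ[k]
          (Fin m → AddMonoidAlgebra k (Fin r → ℤ))) := by
  classical
  haveI : Module.Finite k (AddMonoidAlgebra k A) := Module.Finite.equiv (AddMonoidAlgebra.coeffLinearEquiv k).symm
  obtain ⟨m, q, hqsurj, hqker⟩ := finite_algebra_exists_surjection_pi k (AddMonoidAlgebra k A)
  refine ⟨m, ?_⟩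
  -- the embedding of `k[A]` into `k[ℤʳ × A]`
  let liftA : AddMonoidAlgebra k A →ₐ[k] AddMonoidAlgebra k ((Fin r → ℤ) × A) :=
    AddMonoidAlgebra.mapDomainAlgHom k k (AddMonoidHom.inr (Fin r → ℤ) A)
  have hliftA : ∀ (a : A) (c : k), liftA (AddMonoidAlgebra.single a c)
      = AddMonoidAlgebra.single ((0 : Fin r → ℤ), a) c := by
    intro a c
    show AddMonoidAlgebra.mapDomain _ _ = _
    rw [AddMonoidAlgebra.mapDomain_single]
    rfl
  -- the multiplicative map defining Ψ
  let F : Multiplicative ((Fin r → ℤ) × A) →* (Fin m → AddMonoidAlgebra k (Fin r → ℤ)) :=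
  { toFun := fun x => fun j =>
      q (AddMonoidAlgebra.single x.toAdd.2 1) j • AddMonoidAlgebra.single x.toAdd.1 (1 : k)
    map_one' := by
      funext j
      show q (AddMonoidAlgebra.single (0:A) 1) j • AddMonoidAlgebra.single (0 : Fin r → ℤ) (1:k) = 1
      rw [← AddMonoidAlgebra.one_def, ← AddMonoidAlgebra.one_def, map_one]
      simp
    map_mul' := by
      intro x y
      funext j
      show q (AddMonoidAlgebra.single (x.toAdd.2 + y.toAdd.2) 1) j
          • AddMonoidAlgebra.single (x.toAdd.1 + y.toAdd.1) (1:k)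
        = (q (AddMonoidAlgebra.single x.toAdd.2 1) j • AddMonoidAlgebra.single x.toAdd.1 (1:k))
          * (q (AddMonoidAlgebra.single y.toAdd.2 1) j • AddMonoidAlgebra.single y.toAdd.1 (1:k))
      rw [smul_mul_smul_comm, AddMonoidAlgebra.single_mul_single, one_mul,
        show (AddMonoidAlgebra.single (x.toAdd.2 + y.toAdd.2) (1:k) : AddMonoidAlgebra k A)
          = AddMonoidAlgebra.single x.toAdd.2 1 * AddMonoidAlgebra.single y.toAdd.2 1 by
            rw [AddMonoidAlgebra.single_mul_single, one_mul],
        map_mul]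
      rfl }
  let Ψ : AddMonoidAlgebra k ((Fin r → ℤ) × A) →ₐ[k] (Fin m → AddMonoidAlgebra k (Fin r → ℤ)) :=
    AddMonoidAlgebra.lift k (Fin m → AddMonoidAlgebra k (Fin r → ℤ)) ((Fin r → ℤ) × A) F
  have hΨs : ∀ (p : (Fin r → ℤ) × A) (c : k), Ψ (AddMonoidAlgebra.single p c)
      = c • fun j => q (AddMonoidAlgebra.single p.2 1) j
        • AddMonoidAlgebra.single p.1 (1:k) := by
    intro p c
    show AddMonoidAlgebra.lift k _ _ F (AddMonoidAlgebra.single p c) = _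
    rw [AddMonoidAlgebra.lift_single]
    rfl
  have hΨg : ∀ g : Fin r → ℤ, Ψ (AddMonoidAlgebra.single (g, (0:A)) (1:k))
      = fun j => AddMonoidAlgebra.single g (1:k) := by
    intro g
    rw [hΨs, one_smul]
    funext j
    show q (AddMonoidAlgebra.single (0:A) 1) j • _ = _
    rw [← AddMonoidAlgebra.one_def, map_one, Pi.one_apply, one_smul]
  have hΨA : ∀ s : AddMonoidAlgebra k A, Ψ (liftA s)
      = fun j => algebraMap k (AddMonoidAlgebra k (Fin r → ℤ)) (q s j) := by
    have hext : Ψ.comp liftA = Pi.algHom k _ (fun j =>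
        (Algebra.ofId k (AddMonoidAlgebra k (Fin r → ℤ))).comp
          ((Pi.evalAlgHom k (fun _ => k) j).comp q)) := by
      apply AddMonoidAlgebra.algHom_ext
      intro a
      show Ψ (liftA (AddMonoidAlgebra.single a 1)) = _
      rw [hliftA, hΨs, one_smul]
      funext j
      show q (AddMonoidAlgebra.single a 1) j • AddMonoidAlgebra.single (0 : Fin r → ℤ) (1:k)
        = algebraMap k (AddMonoidAlgebra k (Fin r → ℤ)) (q (AddMonoidAlgebra.single a 1) j)
      rw [← AddMonoidAlgebra.one_def, Algebra.algebraMap_eq_smul_one]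
      exact Subsingleton.elim _ _
    intro s
    exact DFunLike.congr_fun hext s
  -- surjectivity of Ψ
  have hΨsurj : Function.Surjective Ψ := by
    have key : ∀ (j : Fin m) (g : Fin r → ℤ) (c : k),
        Pi.single j (AddMonoidAlgebra.single g c : AddMonoidAlgebra k (Fin r → ℤ))
          ∈ Ψ.range := by
      intro j g c
      obtain ⟨s, hs⟩ := hqsurj (Pi.single j c)
      refine ⟨AddMonoidAlgebra.single (g, (0:A)) (1:k) * liftA s, ?_⟩
      show Ψ (AddMonoidAlgebra.single (g, (0:A)) (1:k) * liftA s) = _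
      have hm : Ψ (AddMonoidAlgebra.single (g, (0:A)) (1:k) * liftA s)
          = Ψ (AddMonoidAlgebra.single (g, (0:A)) (1:k)) * Ψ (liftA s) := map_mul Ψ _ _
      rw [hm, hΨg, hΨA, hs]
      funext j'
      simp only [Pi.mul_apply]
      by_cases h : j' = j
      · subst h
        rw [Pi.single_eq_same, Pi.single_eq_same, mul_comm, ← Algebra.smul_def,
          AddMonoidAlgebra.smul_single', mul_one]
      · rw [Pi.single_eq_of_ne h, Pi.single_eq_of_ne h, map_zero, mul_zero]
    intro v
    suffices hv : v ∈ Ψ.range by obtain ⟨x, hx⟩ := hv; exact ⟨x, hx⟩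
    have hv1 : v = ∑ j, Pi.single j (v j) := (Finset.univ_sum_single v).symm
    rw [hv1]
    refine sum_mem fun j _ => ?_
    have hv2 : Pi.single j (v j) = (v j).coeff.sum fun g c =>
        (Pi.single j (AddMonoidAlgebra.single g c : AddMonoidAlgebra k (Fin r → ℤ))
          : Fin m → AddMonoidAlgebra k (Fin r → ℤ)) := by
      conv_lhs => rw [← AddMonoidAlgebra.sum_coeff_single (v j)]
      exact map_finsuppSum
        (AddMonoidHom.single (fun _ : Fin m => AddMonoidAlgebra k (Fin r → ℤ)) j) _ _
    rw [hv2, Finsupp.sum]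
    exact sum_mem fun g hg => key j g _
  -- the kernel of Ψ consists of nilpotents
  have hΨker : ∀ x : AddMonoidAlgebra k ((Fin r → ℤ) × A), Ψ x = 0 → IsNilpotent x := by
    intro x hx
    set Fc : (Fin r → ℤ) →₀ (A →₀ k) := Finsupp.curry x.coeff with hFc
    have hrowmul : ∀ (g : Fin r → ℤ) (s : AddMonoidAlgebra k A),
        AddMonoidAlgebra.single (g, (0:A)) (1:k) * liftA s
          = s.coeff.sum fun a c =>
            (AddMonoidAlgebra.single (g, a) c : AddMonoidAlgebra k ((Fin r → ℤ) × A)) := by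
      intro g s
      induction s using AddMonoidAlgebra.induction_linear with
      | zero => rw [map_zero, mul_zero, AddMonoidAlgebra.coeff_zero, Finsupp.sum_zero_index]
      | add f₁ f₂ h₁ h₂ =>
        rw [map_add, mul_add, h₁, h₂, AddMonoidAlgebra.coeff_add,
          Finsupp.sum_add_index' (fun a => AddMonoidAlgebra.single_zero _) (fun a b₁ b₂ =>
            AddMonoidAlgebra.single_add _ _ _)]
      | single a c =>
        rw [hliftA, AddMonoidAlgebra.single_mul_single, one_mul,
          AddMonoidAlgebra.sum_single_index
            (h := fun a' c' =>
              (AddMonoidAlgebra.single (g, a') c' : AddMonoidAlgebra k ((Fin r → ℤ) × A)))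
            (by simp)]
        show AddMonoidAlgebra.single ((g, (0:A)) + ((0 : Fin r → ℤ), a)) c = _
        congr 1
        simp
    have hdecomp : x = Fc.sum fun g s =>
        AddMonoidAlgebra.single (g, (0:A)) (1:k) * liftA (.ofCoeff s) := by
      have h1 : (Fc.sum fun g s => AddMonoidAlgebra.single (g, (0:A)) (1:k) * liftA (.ofCoeff s))
          = Fc.sum fun g s => s.sum fun a c =>
            (AddMonoidAlgebra.single (g, a) c : AddMonoidAlgebra k ((Fin r → ℤ) × A)) :=
        Finsupp.sum_congr fun g _ => hrowmul g (.ofCoeff _)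
      have h2 : (Fc.sum fun g s => s.sum fun a c =>
            (AddMonoidAlgebra.single (g, a) c : AddMonoidAlgebra k ((Fin r → ℤ) × A)))
          = x.coeff.sum fun p c => AddMonoidAlgebra.single (p.1, p.2) c :=
        Finsupp.sum_curry_index x.coeff _
      rw [h1, h2]
      simp only [Prod.mk.eta]
      exact (AddMonoidAlgebra.sum_coeff_single x).symm
    have hx2 : (Fc.sum fun g s => (fun j => AddMonoidAlgebra.single g (q (.ofCoeff s) j)
        : Fin m → AddMonoidAlgebra k (Fin r → ℤ))) = 0 := by
      rw [← hx, hdecomp, map_finsuppSum]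
      refine Finsupp.sum_congr fun g _ => ?_
      rw [map_mul, hΨg, hΨA]
      funext j
      simp only [Pi.mul_apply]
      rw [mul_comm, ← Algebra.smul_def, AddMonoidAlgebra.smul_single', mul_one]
    have hrows0 : ∀ g : Fin r → ℤ, q (.ofCoeff (Fc g)) = 0 := by
      intro g
      funext j
      have h4 := congrFun hx2 j
      rw [Finsupp.sum, Finset.sum_apply] at h4
      simp only [Pi.zero_apply] at h4
      have h4' : (∑ g' ∈ Fc.support, (Finsupp.single g' (q (.ofCoeff (Fc g')) j)
          : (Fin r → ℤ) →₀ k)) = 0 := by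
        rw [← AddMonoidAlgebra.coeff_zero, ← h4, AddMonoidAlgebra.coeff_sum]; rfl
      have h5 := DFunLike.congr_fun h4' g
      rw [Finsupp.finset_sum_apply] at h5
      simp only [Finsupp.single_apply, Finsupp.zero_apply] at h5
      rw [Finset.sum_ite_eq'] at h5
      by_cases hmem : g ∈ Fc.support
      · rw [if_pos hmem] at h5
        exact h5
      · have h6 : Fc g = 0 := Finsupp.notMem_support_iff.mp hmem
        show q (.ofCoeff (Fc g)) j = 0
        rw [h6, AddMonoidAlgebra.ofCoeff_zero, map_zero]
        rfl
    let row : (Fin r → ℤ) → AddMonoidAlgebra k A := fun g => .ofCoeff (Fc g)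
    have hnil : ∀ g : Fin r → ℤ, IsNilpotent (row g) := fun g => hqker _ (hrows0 g)
    have hmem : x ∈ nilradical (AddMonoidAlgebra k ((Fin r → ℤ) × A)) := by
      rw [hdecomp, Finsupp.sum]
      exact sum_mem fun g _ =>
        Ideal.mul_mem_left _ _ (mem_nilradical.mpr ((hnil g).map liftA))
    exact mem_nilradical.mp hmem
  -- the kernel is exactly the nilradical
  have hker : RingHom.ker Ψ = nilradical (AddMonoidAlgebra k ((Fin r → ℤ) × A)) := by
    refine le_antisymm (fun x hx => mem_nilradical.mpr (hΨker x (RingHom.mem_ker.mp hx)))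
      (fun x hx => RingHom.mem_ker.mpr ?_)
    exact ((mem_nilradical.mp hx).map Ψ).eq_zero
  exact ⟨(Ideal.quotientEquivAlgOfEq k hker.symm).trans
    (Ideal.quotientKerAlgEquivOfSurjective hΨsurj)⟩
end
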